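/- arXiv:1008.3441 — 10 statements merged into one kernel-verified Lean document; each statement's English description precedes it below -/
import Mathlib

section
/- There exist 2×2 positive definite matrices X, Y and ν ∈ (0,1] such that Tr[X #_ν Y] < (1/2) Tr[X + Y - |X - Y|]. Concretely, for ν = 1/2, X = [[10,7],[7,5]] and Y = [[16,6],[6,3]], the difference Tr[X #_{1/2} Y] - (1/2)Tr[X + Y - |X-Y|] is negative. -/
open Matrix
open scoped ComplexOrder

/-- Matrix power via continuous functional calculus (real power of eigenvalues). -/
noncomputable def mpow {n : ℕ} (A : Matrix (Fin n) (Fin n) ℂ) (p : ℝ) : Matrix (Fin n) (Fin n) ℂ :=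
  cfc (fun x : ℝ => x ^ p) A

/-- Absolute value of a matrix: |X| = (X*X)^{1/2}. -/
noncomputable def matAbs {n : ℕ} (A : Matrix (Fin n) (Fin n) ℂ) : Matrix (Fin n) (Fin n) ℂ :=
  mpow (Aᴴ * A) (1/2)

/-- Deformed logarithm ln_ν applied via functional calculus. -/
noncomputable def tlog {n : ℕ} (ν : ℝ) (A : Matrix (Fin n) (Fin n) ℂ) : Matrix (Fin n) (Fin n) ℂ :=
  cfc (fun x : ℝ => (x ^ ν - 1) / ν) A

/-- Deformed exponential exp_ν applied via functional calculus. -/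
noncomputable def texp {n : ℕ} (ν : ℝ) (A : Matrix (Fin n) (Fin n) ℂ) : Matrix (Fin n) (Fin n) ℂ :=
  cfc (fun x : ℝ => (1 + ν * x) ^ (1/ν)) A

/-- Tsallis relative entropy D_ν(X|Y) = (Tr X - Tr[X^{1-ν} Y^ν]) / ν. -/
noncomputable def tsallisRel {n : ℕ} (X Y : Matrix (Fin n) (Fin n) ℂ) (ν : ℝ) : ℝ :=
  ((X.trace).re - ((mpow X (1 - ν) * mpow Y ν).trace).re) / ν

/-- ν-weighted matrix geometric mean X #_ν Y. -/
noncomputable def geomMean {n : ℕ} (X Y : Matrix (Fin n) (Fin n) ℂ) (ν : ℝ) :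
    Matrix (Fin n) (Fin n) ℂ :=
  mpow X (1/2) * mpow (mpow X (-(1/2)) * Y * mpow X (-(1/2))) ν * mpow X (1/2)

/- ### Auxiliary lemmas -/

lemma cfc_lin {A : Matrix (Fin 2) (Fin 2) ℂ} (hA : IsSelfAdjoint A) (f : ℝ → ℝ) (α β : ℝ)
    (h : Set.EqOn f (fun x => α * x + β) (spectrum ℝ A)) :
    cfc f A = (α : ℂ) • A + (β : ℂ) • (1 : Matrix (Fin 2) (Fin 2) ℂ) := by
  rw [cfc_congr h]
  rw [cfc_add A (fun x => α * x) (fun _ => β) (by fun_prop) (by fun_prop),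
    cfc_const_mul α (fun x : ℝ => x) A (by fun_prop), cfc_id' ℝ A, cfc_const β A hA]
  congr 1
  ext i j
  simp [Matrix.algebraMap_matrix_apply, Matrix.smul_apply, Matrix.one_apply]

lemma saX : IsSelfAdjoint (!![10,7;7,5] : Matrix (Fin 2) (Fin 2) ℂ) := by
  show star _ = _
  rw [Matrix.star_eq_conjTranspose]
  ext i j; fin_cases i <;> fin_cases j <;> simp

lemma saM : IsSelfAdjoint (!![219/17, -(213/17); -(213/17), 223/17] :
    Matrix (Fin 2) (Fin 2) ℂ) := by
  show star _ = _
  rw [Matrix.star_eq_conjTranspose]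
  ext i j; fin_cases i <;> fin_cases j <;> simp

lemma saD : IsSelfAdjoint (!![37,-4;-4,5] : Matrix (Fin 2) (Fin 2) ℂ) := by
  show star _ = _
  rw [Matrix.star_eq_conjTranspose]
  ext i j; fin_cases i <;> fin_cases j <;> simp

lemma specX : ∀ x ∈ spectrum ℝ (!![10,7;7,5] : Matrix (Fin 2) (Fin 2) ℂ),
    x^2 = 15*x - 1 ∧ 0 < x := by
  intro x hx
  rw [spectrum.mem_iff, Matrix.isUnit_iff_isUnit_det, isUnit_iff_ne_zero, not_ne_iff,
    Matrix.det_fin_two] at hx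
  simp [Matrix.algebraMap_matrix_apply] at hx
  have hx' : ((x^2 - 15*x + 1 : ℝ) : ℂ) = 0 := by push_cast; linear_combination hx
  rw [Complex.ofReal_eq_zero] at hx'
  constructor
  · nlinarith
  · nlinarith

lemma specM : ∀ x ∈ spectrum ℝ (!![219/17, -(213/17); -(213/17), 223/17] :
    Matrix (Fin 2) (Fin 2) ℂ), x^2 = 26*x - 12 ∧ 0 < x := by
  intro x hx
  rw [spectrum.mem_iff, Matrix.isUnit_iff_isUnit_det, isUnit_iff_ne_zero, not_ne_iff,
    Matrix.det_fin_two] at hx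
  simp [Matrix.algebraMap_matrix_apply] at hx
  have hx' : ((x^2 - 26*x + 12 : ℝ) : ℂ) = 0 := by push_cast; linear_combination hx
  rw [Complex.ofReal_eq_zero] at hx'
  constructor
  · nlinarith
  · nlinarith

lemma specD : ∀ x ∈ spectrum ℝ (!![37,-4;-4,5] : Matrix (Fin 2) (Fin 2) ℂ),
    x^2 = 42*x - 169 ∧ 0 < x := by
  intro x hx
  rw [spectrum.mem_iff, Matrix.isUnit_iff_isUnit_det, isUnit_iff_ne_zero, not_ne_iff,
    Matrix.det_fin_two] at hx
  simp [Matrix.algebraMap_matrix_apply] at hx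
  have hx' : ((x^2 - 42*x + 169 : ℝ) : ℂ) = 0 := by push_cast; linear_combination hx
  rw [Complex.ofReal_eq_zero] at hx'
  constructor
  · nlinarith
  · nlinarith

lemma posdefX : (!![10,7;7,5] : Matrix (Fin 2) (Fin 2) ℂ).PosDef := by
  refine Matrix.posDef_iff_dotProduct_mulVec.mpr ⟨saX, fun x hx => ?_⟩
  have hx' : x 0 ≠ 0 ∨ x 1 ≠ 0 := by
    by_contra h; push_neg at h; exact hx (by ext i; fin_cases i <;> simp [h.1, h.2])
  rw [Complex.lt_def]
  simp only [dotProduct, Matrix.mulVec, Fin.sum_univ_two, Pi.star_apply]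
  norm_num [Complex.add_re, Complex.mul_re, Complex.add_im, Complex.mul_im, Complex.star_def,
    Complex.conj_re, Complex.conj_im]
  set a := (x 0).re; set b := (x 0).im; set c := (x 1).re; set d := (x 1).im
  have h5 : a ≠ 0 ∨ b ≠ 0 ∨ c ≠ 0 ∨ d ≠ 0 := by
    rcases hx' with h | h
    · rw [Ne, Complex.ext_iff] at h; push_neg at h; simp at h; tauto
    · rw [Ne, Complex.ext_iff] at h; push_neg at h; simp at h; tauto
  have h6 : 0 < a^2 + b^2 + c^2 + d^2 := by
    rcases h5 with h|h|h|h <;> positivity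
  constructor
  · nlinarith [sq_nonneg (10*a + 7*c), sq_nonneg (10*b + 7*d), sq_nonneg (7*a + 5*c),
      sq_nonneg (7*b + 5*d)]
  · ring

lemma posdefY : (!![16,6;6,3] : Matrix (Fin 2) (Fin 2) ℂ).PosDef := by
  have sa : IsSelfAdjoint (!![16,6;6,3] : Matrix (Fin 2) (Fin 2) ℂ) := by
    show star _ = _
    rw [Matrix.star_eq_conjTranspose]
    ext i j; fin_cases i <;> fin_cases j <;> simp
  refine Matrix.posDef_iff_dotProduct_mulVec.mpr ⟨sa, fun x hx => ?_⟩
  have hx' : x 0 ≠ 0 ∨ x 1 ≠ 0 := by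
    by_contra h; push_neg at h; exact hx (by ext i; fin_cases i <;> simp [h.1, h.2])
  rw [Complex.lt_def]
  simp only [dotProduct, Matrix.mulVec, Fin.sum_univ_two, Pi.star_apply]
  norm_num [Complex.add_re, Complex.mul_re, Complex.add_im, Complex.mul_im, Complex.star_def,
    Complex.conj_re, Complex.conj_im]
  set a := (x 0).re; set b := (x 0).im; set c := (x 1).re; set d := (x 1).im
  have h5 : a ≠ 0 ∨ b ≠ 0 ∨ c ≠ 0 ∨ d ≠ 0 := by
    rcases hx' with h | h
    · rw [Ne, Complex.ext_iff] at h; push_neg at h; simp at h; tauto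
    · rw [Ne, Complex.ext_iff] at h; push_neg at h; simp at h; tauto
  have h6 : 0 < a^2 + b^2 + c^2 + d^2 := by
    rcases h5 with h|h|h|h <;> positivity
  constructor
  · nlinarith [sq_nonneg (16*a + 6*c), sq_nonneg (16*b + 6*d), sq_nonneg (6*a + 3*c),
      sq_nonneg (6*b + 3*d)]
  · ring

set_option maxHeartbeats 2000000 in
/-- Counterexample: Tr[X #_{1/2} Y] < (1/2) Tr[X + Y - |X - Y|] for
X = [[10,7],[7,5]], Y = [[16,6],[6,3]]. -/
theorem geomMean_trace_counterexample :
    ∃ (X Y : Matrix (Fin 2) (Fin 2) ℂ) (ν : ℝ), ν ∈ Set.Ioc (0:ℝ) 1 ∧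
      X.PosDef ∧ Y.PosDef ∧ X = !![10, 7; 7, 5] ∧ Y = !![16, 6; 6, 3] ∧ ν = 1/2 ∧
      ((geomMean X Y ν).trace).re < (1/2) * ((X + Y - matAbs (X - Y)).trace).re := by
  refine ⟨!![10,7;7,5], !![16,6;6,3], 1/2, by norm_num, posdefX, posdefY, rfl, rfl, rfl, ?_⟩
  have h17p : (0:ℝ) < Real.sqrt 17 := Real.sqrt_pos.mpr (by norm_num)
  have h17sq : Real.sqrt 17 ^ 2 = 17 := Real.sq_sqrt (by norm_num)
  have h3p : (0:ℝ) < Real.sqrt 3 := Real.sqrt_pos.mpr (by norm_num)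
  have h3sq : Real.sqrt 3 ^ 2 = 3 := Real.sq_sqrt (by norm_num)
  have hsp : (0:ℝ) < Real.sqrt (26 + 4 * Real.sqrt 3) := Real.sqrt_pos.mpr (by positivity)
  have hssq : Real.sqrt (26 + 4 * Real.sqrt 3) ^ 2 = 26 + 4 * Real.sqrt 3 :=
    Real.sq_sqrt (by positivity)
  set s17 : ℝ := Real.sqrt 17 with hs17def
  set r3 : ℝ := Real.sqrt 3 with hr3def
  set s : ℝ := Real.sqrt (26 + 4 * Real.sqrt 3) with hsdef
  -- X^{1/2}
  have hX12 : mpow (!![10,7;7,5] : Matrix (Fin 2) (Fin 2) ℂ) (1/2)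
      = ((s17⁻¹ : ℝ) : ℂ) • (!![10,7;7,5] : Matrix (Fin 2) (Fin 2) ℂ)
        + ((s17⁻¹ : ℝ) : ℂ) • 1 := by
    refine cfc_lin saX _ _ _ ?_
    intro x hx
    obtain ⟨hq, hpos⟩ := specX x hx
    show x ^ ((1:ℝ)/2) = _
    rw [← Real.sqrt_eq_rpow]
    have hnn : 0 ≤ s17⁻¹ * x + s17⁻¹ := by positivity
    have key : (s17⁻¹ * x + s17⁻¹)^2 = x := by
      have e : (s17⁻¹ * x + s17⁻¹)^2 = (s17^2)⁻¹ * (x+1)^2 := by ring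
      rw [e, h17sq]
      linear_combination ((17:ℝ))⁻¹ * hq
    calc Real.sqrt x = Real.sqrt ((s17⁻¹ * x + s17⁻¹)^2) := by rw [key]
      _ = _ := Real.sqrt_sq hnn
  -- X^{-1/2}
  have hXm12 : mpow (!![10,7;7,5] : Matrix (Fin 2) (Fin 2) ℂ) (-(1/2))
      = ((-s17⁻¹ : ℝ) : ℂ) • (!![10,7;7,5] : Matrix (Fin 2) (Fin 2) ℂ)
        + ((16*s17⁻¹ : ℝ) : ℂ) • 1 := by
    refine cfc_lin saX _ _ _ ?_
    intro x hx
    obtain ⟨hq, hpos⟩ := specX x hx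
    show x ^ (-((1:ℝ)/2)) = _
    rw [Real.rpow_neg hpos.le, ← Real.sqrt_eq_rpow]
    have hx16 : x < 16 := by nlinarith
    have hg : 0 < -s17⁻¹ * x + 16*s17⁻¹ := by
      have h0 : (0:ℝ) < s17⁻¹ * (16 - x) := mul_pos (inv_pos.mpr h17p) (by linarith)
      nlinarith [h0]
    have hsx : 0 < Real.sqrt x := Real.sqrt_pos.mpr hpos
    have hxs : Real.sqrt x ^ 2 = x := Real.sq_sqrt hpos.le
    have h1 : ((-s17⁻¹ * x + 16*s17⁻¹) * Real.sqrt x)^2 = 1 := by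
      have e : ((-s17⁻¹ * x + 16*s17⁻¹) * Real.sqrt x)^2
          = (s17^2)⁻¹ * ((16-x)^2 * (Real.sqrt x ^ 2)) := by ring
      rw [e, hxs, h17sq]
      have e2 : (16-x)^2 * x = 17 := by linear_combination (x - 17) * hq
      rw [e2]
      norm_num
    have h2 : (-s17⁻¹ * x + 16*s17⁻¹) * Real.sqrt x = 1 := by
      have hpos2 : 0 < (-s17⁻¹ * x + 16*s17⁻¹) * Real.sqrt x := mul_pos hg hsx
      nlinarith [h1, hpos2]
    exact inv_eq_of_mul_eq_one_left h2
  -- the middle matrix X^{-1/2} Y X^{-1/2}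
  have ht2 : ((s17⁻¹ : ℝ) : ℂ)^2 = (17:ℂ)⁻¹ := by
    rw [← Complex.ofReal_pow, inv_pow, h17sq, Complex.ofReal_inv]
    norm_num
  have hMid : mpow (!![10,7;7,5] : Matrix (Fin 2) (Fin 2) ℂ) (-(1/2)) * !![16,6;6,3] *
      mpow (!![10,7;7,5] : Matrix (Fin 2) (Fin 2) ℂ) (-(1/2))
      = !![219/17, -(213/17); -(213/17), 223/17] := by
    rw [hXm12]
    have hB : ((-s17⁻¹ : ℝ) : ℂ) • (!![10,7;7,5] : Matrix (Fin 2) (Fin 2) ℂ)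
        + ((16*s17⁻¹ : ℝ) : ℂ) • 1 = ((s17⁻¹ : ℝ) : ℂ) • !![6,-7;-7,11] := by
      ext i j; fin_cases i <;> fin_cases j <;>
        simp [Matrix.smul_apply, Matrix.one_apply] <;> push_cast <;> ring
    rw [hB, Matrix.smul_mul, Matrix.mul_smul, Matrix.smul_mul, smul_smul]
    have hBYB : (!![6,-7;-7,11] : Matrix (Fin 2) (Fin 2) ℂ) * !![16,6;6,3] * !![6,-7;-7,11]
        = !![219,-213;-213,223] := by
      rw [Matrix.mul_fin_two, Matrix.mul_fin_two]; norm_num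
    rw [hBYB, show ((s17⁻¹ : ℝ) : ℂ) * ((s17⁻¹ : ℝ) : ℂ) = (17:ℂ)⁻¹ from by
      rw [← ht2]; ring]
    ext i j; fin_cases i <;> fin_cases j <;>
      simp [Matrix.smul_apply] <;> norm_num
  -- M^{1/2}
  have hM12 : mpow (!![219/17, -(213/17); -(213/17), 223/17] : Matrix (Fin 2) (Fin 2) ℂ) (1/2)
      = ((s⁻¹ : ℝ) : ℂ) • (!![219/17, -(213/17); -(213/17), 223/17] : Matrix (Fin 2) (Fin 2) ℂ)
        + ((2*r3*s⁻¹ : ℝ) : ℂ) • 1 := by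
    refine cfc_lin saM _ _ _ ?_
    intro x hx
    obtain ⟨hq, hpos⟩ := specM x hx
    show x ^ ((1:ℝ)/2) = _
    rw [← Real.sqrt_eq_rpow]
    have hnn : 0 ≤ s⁻¹ * x + 2*r3*s⁻¹ := by positivity
    have key : (s⁻¹ * x + 2*r3*s⁻¹)^2 = x := by
      have e : (s⁻¹ * x + 2*r3*s⁻¹)^2 = (s^2)⁻¹ * (x + 2*r3)^2 := by ring
      rw [e, hssq]
      have e2 : (x + 2*r3)^2 = (26 + 4*r3) * x := by
        linear_combination hq + 4*h3sq
      rw [e2]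
      have h260 : (26 + 4*r3) ≠ 0 := by positivity
      field_simp
    calc Real.sqrt x = Real.sqrt ((s⁻¹ * x + 2*r3*s⁻¹)^2) := by rw [key]
      _ = _ := Real.sqrt_sq hnn
  -- |X - Y|
  have hXY : (!![10,7;7,5] : Matrix (Fin 2) (Fin 2) ℂ) - !![16,6;6,3] = !![-6,1;1,2] := by
    ext i j; fin_cases i <;> fin_cases j <;> simp [Matrix.sub_apply] <;> norm_num
  have hCT : (!![-6,1;1,2] : Matrix (Fin 2) (Fin 2) ℂ)ᴴ * !![-6,1;1,2] = !![37,-4;-4,5] := by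
    have hct : (!![-6,1;1,2] : Matrix (Fin 2) (Fin 2) ℂ)ᴴ = !![-6,1;1,2] := by
      ext i j; fin_cases i <;> fin_cases j <;> simp
    rw [hct, Matrix.mul_fin_two]; norm_num
  have hAbs : matAbs ((!![10,7;7,5] : Matrix (Fin 2) (Fin 2) ℂ) - !![16,6;6,3])
      = (((2*s17)⁻¹ : ℝ) : ℂ) • (!![37,-4;-4,5] : Matrix (Fin 2) (Fin 2) ℂ)
        + ((13*(2*s17)⁻¹ : ℝ) : ℂ) • 1 := by
    rw [matAbs, hXY, hCT]
    refine cfc_lin saD _ _ _ ?_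
    intro x hx
    obtain ⟨hq, hpos⟩ := specD x hx
    show x ^ ((1:ℝ)/2) = _
    rw [← Real.sqrt_eq_rpow]
    have hnn : 0 ≤ (2*s17)⁻¹ * x + 13*(2*s17)⁻¹ := by positivity
    have key : ((2*s17)⁻¹ * x + 13*(2*s17)⁻¹)^2 = x := by
      have e : ((2*s17)⁻¹ * x + 13*(2*s17)⁻¹)^2 = (s17^2)⁻¹ * ((x + 13)^2 / 4) := by ring
      rw [e, h17sq]
      have e2 : (x + 13)^2 = 68 * x := by linear_combination hq
      rw [e2]
      ring
    calc Real.sqrt x = Real.sqrt (((2*s17)⁻¹ * x + 13*(2*s17)⁻¹)^2) := by rw [key]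
      _ = _ := Real.sqrt_sq hnn
  -- trace of the geometric mean
  have hLt : ((geomMean (!![10,7;7,5] : Matrix (Fin 2) (Fin 2) ℂ) !![16,6;6,3] (1/2)).trace)
      = (((s⁻¹*323 + 2*r3*s⁻¹*255)/17 : ℝ) : ℂ) := by
    unfold geomMean
    rw [hMid, hM12, hX12]
    have hP : ((s17⁻¹ : ℝ) : ℂ) • (!![10,7;7,5] : Matrix (Fin 2) (Fin 2) ℂ)
        + ((s17⁻¹ : ℝ) : ℂ) • 1 = ((s17⁻¹ : ℝ) : ℂ) • !![11,7;7,6] := by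
      ext i j; fin_cases i <;> fin_cases j <;>
        simp [Matrix.smul_apply, Matrix.one_apply] <;> ring
    have hQ : ((s⁻¹ : ℝ) : ℂ) • (!![219/17, -(213/17); -(213/17), 223/17] :
          Matrix (Fin 2) (Fin 2) ℂ) + ((2*r3*s⁻¹ : ℝ) : ℂ) • 1
        = !![((s⁻¹ : ℝ) : ℂ)*(219/17) + ((2*r3*s⁻¹ : ℝ) : ℂ), -(((s⁻¹ : ℝ) : ℂ)*(213/17));
            -(((s⁻¹ : ℝ) : ℂ)*(213/17)), ((s⁻¹ : ℝ) : ℂ)*(223/17) + ((2*r3*s⁻¹ : ℝ) : ℂ)] := by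
      ext i j; fin_cases i <;> fin_cases j <;>
        simp [Matrix.smul_apply, Matrix.one_apply] <;> push_cast <;> ring
    rw [hP, hQ, Matrix.smul_mul, Matrix.mul_smul, Matrix.smul_mul, smul_smul,
      Matrix.mul_fin_two, Matrix.mul_fin_two, Matrix.trace_smul, Matrix.trace_fin_two_of,
      show ((s17⁻¹ : ℝ) : ℂ) * ((s17⁻¹ : ℝ) : ℂ) = (17:ℂ)⁻¹ from by rw [← ht2]; ring]
    simp only [smul_eq_mul]
    push_cast
    ring
  -- trace of the right-hand side
  have hRt : (((!![10,7;7,5] : Matrix (Fin 2) (Fin 2) ℂ) + !![16,6;6,3]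
      - matAbs (!![10,7;7,5] - !![16,6;6,3])).trace)
      = ((34 - ((2*s17)⁻¹*42 + 13*(2*s17)⁻¹*2) : ℝ) : ℂ) := by
    rw [Matrix.trace_sub, Matrix.trace_add, hAbs, Matrix.trace_add, Matrix.trace_smul,
      Matrix.trace_smul, Matrix.trace_one]
    rw [Matrix.trace_fin_two_of, Matrix.trace_fin_two_of, Matrix.trace_fin_two_of]
    simp only [smul_eq_mul]
    push_cast
    simp only [Fintype.card_fin]
    push_cast
    ring
  rw [hLt, hRt, Complex.ofReal_re, Complex.ofReal_re]
  clear hLt hRt hX12 hXm12 hM12 hMid hAbs hXY hCT ht2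
  clear_value s17 r3 s
  -- the numerical inequality
  have hb1 : (1.732:ℝ) < r3 := by nlinarith [h3sq, h3p.le]
  have hb2 : r3 < 1.7321 := by nlinarith [h3sq, h3p.le]
  have hb3 : (4.123:ℝ) < s17 := by nlinarith [h17sq, h17p.le]
  have hb5 : (5.738:ℝ) < s := by nlinarith [hssq, hsp.le, hb1]
  have hsip : 0 < s⁻¹ := inv_pos.mpr hsp
  have hgip : 0 < s17⁻¹ := inv_pos.mpr h17p
  have hsi : s⁻¹ < 0.17429 := by
    have h := inv_strictAnti₀ (by norm_num : (0:ℝ) < 5.738) hb5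
    calc s⁻¹ < 5.738⁻¹ := h
      _ < 0.17429 := by norm_num
  have hgi : s17⁻¹ < 0.24255 := by
    have h := inv_strictAnti₀ (by norm_num : (0:ℝ) < 4.123) hb3
    calc s17⁻¹ < 4.123⁻¹ := h
      _ < 0.24255 := by norm_num
  have hrs : r3 * s⁻¹ < 1.7321 * 0.17429 :=
    mul_lt_mul'' hb2 hsi h3p.le hsip.le
  have h2inv : (2*s17)⁻¹ = s17⁻¹ / 2 := by rw [mul_inv]; ring
  rw [h2inv]
  nlinarith [hrs, hsi, hgi, hsip, hgip]
end

section
/- For positive definite matrices X, Y and ν ∈ (0,1], the generalized Peierls–Bogoliubov inequality holds: D_ν(X|Y) ≥ (Tr[X] - (Tr[X])^{1-ν} (Tr[Y])^ν)/ν. -/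
open Matrix Finset
open scoped ComplexOrder

-- scalar doubly-stochastic Hölder
lemma scalar_holder {m : ℕ} (a b : Fin m → ℝ) (p : Fin m → Fin m → ℝ)
    (ha : ∀ i, 0 ≤ a i) (hb : ∀ j, 0 ≤ b j) (hp : ∀ i j, 0 ≤ p i j)
    (hrow : ∀ i, ∑ j, p i j = 1) (hcol : ∀ j, ∑ i, p i j = 1)
    (hS : 0 < ∑ i, a i) (hT : 0 < ∑ j, b j) {ν : ℝ} (hν0 : 0 < ν) (hν1 : ν ≤ 1) :
    ∑ i, ∑ j, p i j * (a i ^ (1 - ν) * b j ^ ν) ≤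
      (∑ i, a i) ^ (1 - ν) * (∑ j, b j) ^ ν := by
  set S := ∑ i, a i with hSdef
  set T := ∑ j, b j with hTdef
  have hSp : (0:ℝ) < S ^ (1 - ν) := Real.rpow_pos_of_pos hS _
  have hTp : (0:ℝ) < T ^ ν := Real.rpow_pos_of_pos hT _
  have key : ∀ i j, p i j * (a i ^ (1 - ν) * b j ^ ν) ≤
      p i j * ((1 - ν) * (a i / S) + ν * (b j / T)) * (S ^ (1 - ν) * T ^ ν) := by
    intro i j
    have h1 : (a i / S) ^ (1 - ν) * (b j / T) ^ ν ≤ (1 - ν) * (a i / S) + ν * (b j / T) :=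
      Real.geom_mean_le_arith_mean2_weighted (by linarith) hν0.le
        (div_nonneg (ha i) hS.le) (div_nonneg (hb j) hT.le) (by ring)
    have h2 : a i ^ (1 - ν) * b j ^ ν =
        ((a i / S) ^ (1 - ν) * (b j / T) ^ ν) * (S ^ (1 - ν) * T ^ ν) := by
      rw [Real.div_rpow (ha i) hS.le, Real.div_rpow (hb j) hT.le]
      field_simp
    calc p i j * (a i ^ (1 - ν) * b j ^ ν)
        = p i j * ((a i / S) ^ (1 - ν) * (b j / T) ^ ν) * (S ^ (1 - ν) * T ^ ν) := by
          rw [h2]; ring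
      _ ≤ p i j * ((1 - ν) * (a i / S) + ν * (b j / T)) * (S ^ (1 - ν) * T ^ ν) := by
          apply mul_le_mul_of_nonneg_right _ (by positivity)
          exact mul_le_mul_of_nonneg_left h1 (hp i j)
  calc ∑ i, ∑ j, p i j * (a i ^ (1 - ν) * b j ^ ν)
      ≤ ∑ i, ∑ j, p i j * ((1 - ν) * (a i / S) + ν * (b j / T)) * (S ^ (1 - ν) * T ^ ν) :=
        Finset.sum_le_sum fun i _ => Finset.sum_le_sum fun j _ => key i j
    _ = S ^ (1 - ν) * T ^ ν := by
        have expand : ∀ i j, p i j * ((1 - ν) * (a i / S) + ν * (b j / T)) * (S ^ (1 - ν) * T ^ ν)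
            = ((1 - ν) / S * (S ^ (1 - ν) * T ^ ν)) * (a i * p i j)
              + (ν / T * (S ^ (1 - ν) * T ^ ν)) * (b j * p i j) := by
          intro i j; field_simp
        simp only [expand, Finset.sum_add_distrib, ← Finset.mul_sum]
        simp only [hrow, mul_one, ← hSdef]
        have e2 : ∑ y, ∑ x, b y * p x y = T := by
          simp only [← Finset.mul_sum, hcol, mul_one, hTdef]
        rw [Finset.sum_comm, e2]
        field_simp
        ring

lemma trace_diag_conj {m : ℕ} (W : Matrix (Fin m) (Fin m) ℂ) (d e : Fin m → ℝ) :
    ((diagonal (fun i => (d i : ℂ)) * W * diagonal (fun j => (e j : ℂ)) * star W).trace).re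
      = ∑ i, ∑ j, d i * e j * Complex.normSq (W i j) := by
  have h : (diagonal (fun i => (d i : ℂ)) * W * diagonal (fun j => (e j : ℂ)) * star W).trace
      = ∑ i, ∑ j, ((d i * e j * Complex.normSq (W i j) : ℝ) : ℂ) := by
    rw [Matrix.trace]
    apply Finset.sum_congr rfl
    intro i _
    rw [Matrix.diag_apply, Matrix.mul_apply]
    apply Finset.sum_congr rfl
    intro j _
    rw [Matrix.mul_diagonal, Matrix.diagonal_mul, Matrix.star_apply]
    have := Complex.mul_conj (W i j)
    push_cast
    rw [← this, Complex.star_def]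
    ring
  rw [h]
  rw [show (∑ i, ∑ j, ((d i * e j * Complex.normSq (W i j) : ℝ) : ℂ))
      = ((∑ i, ∑ j, d i * e j * Complex.normSq (W i j) : ℝ) : ℂ) by push_cast; rfl]
  exact Complex.ofReal_re _

lemma trace_re_eq {m : ℕ} {A : Matrix (Fin m) (Fin m) ℂ} (hA : A.IsHermitian) :
    (A.trace).re = ∑ i, hA.eigenvalues i := by
  have hU : (star ((hA.eigenvectorUnitary : Matrix (Fin m) (Fin m) ℂ)))
      * (hA.eigenvectorUnitary : Matrix (Fin m) (Fin m) ℂ) = 1 :=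
    mem_unitaryGroup_iff'.mp hA.eigenvectorUnitary.2
  conv_lhs => rw [hA.spectral_theorem, Unitary.conjStarAlgAut_apply]
  rw [Matrix.trace_mul_comm, ← Matrix.mul_assoc, hU, Matrix.one_mul, Matrix.trace_diagonal]
  rw [show (∑ i, (RCLike.ofReal ∘ hA.eigenvalues) i : ℂ)
      = ((∑ i, hA.eigenvalues i : ℝ) : ℂ) by push_cast; rfl]
  exact Complex.ofReal_re _

/-- Generalized Peierls–Bogoliubov inequality:
D_ν(X|Y) ≥ (Tr X - (Tr X)^{1-ν} (Tr Y)^ν)/ν. -/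
theorem generalized_peierls_bogoliubov {n : ℕ} (X Y : Matrix (Fin n) (Fin n) ℂ)
    (hX : X.PosDef) (hY : Y.PosDef) (ν : ℝ) (hν : ν ∈ Set.Ioc (0:ℝ) 1) :
    tsallisRel X Y ν ≥
      ((X.trace).re - (X.trace).re ^ (1 - ν) * (Y.trace).re ^ ν) / ν := by
  obtain ⟨hν0, hν1⟩ := hν
  rcases Nat.eq_zero_or_pos n with hn | hn
  · subst hn
    simp [tsallisRel, Matrix.trace, Real.zero_rpow hν0.ne']
  haveI : Nonempty (Fin n) := Fin.pos_iff_nonempty.mp hn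
  have hXh : X.IsHermitian := hX.1
  have hYh : Y.IsHermitian := hY.1
  set U : Matrix (Fin n) (Fin n) ℂ := (hXh.eigenvectorUnitary : Matrix (Fin n) (Fin n) ℂ) with hUdef
  set V : Matrix (Fin n) (Fin n) ℂ := (hYh.eigenvectorUnitary : Matrix (Fin n) (Fin n) ℂ) with hVdef
  set a : Fin n → ℝ := hXh.eigenvalues with hadef
  set b : Fin n → ℝ := hYh.eigenvalues with hbdef
  have hU1 : U * star U = 1 := mem_unitaryGroup_iff.mp hXh.eigenvectorUnitary.2
  have hU2 : star U * U = 1 := mem_unitaryGroup_iff'.mp hXh.eigenvectorUnitary.2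
  have hV1 : V * star V = 1 := mem_unitaryGroup_iff.mp hYh.eigenvectorUnitary.2
  have hV2 : star V * V = 1 := mem_unitaryGroup_iff'.mp hYh.eigenvectorUnitary.2
  set W : Matrix (Fin n) (Fin n) ℂ := star U * V with hWdef
  have hW1 : W * star W = 1 := by
    rw [hWdef, Matrix.star_mul, star_star, Matrix.mul_assoc, ← Matrix.mul_assoc V (star V) U,
      hV1, Matrix.one_mul, hU2]
  have hW2 : star W * W = 1 := by
    rw [hWdef, Matrix.star_mul, star_star, Matrix.mul_assoc, ← Matrix.mul_assoc U (star U) V,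
      hU1, Matrix.one_mul, hV2]
  -- expansions of mpow
  have hmX : mpow X (1 - ν) = U * diagonal (fun i => ((a i ^ (1 - ν) : ℝ) : ℂ)) * star U := by
    unfold mpow
    rw [hXh.cfc_eq]
    rfl
  have hmY : mpow Y ν = V * diagonal (fun j => ((b j ^ ν : ℝ) : ℂ)) * star V := by
    unfold mpow
    rw [hYh.cfc_eq]
    rfl
  -- trace formula
  have hprod : mpow X (1 - ν) * mpow Y ν
      = U * (diagonal (fun i => ((a i ^ (1 - ν) : ℝ) : ℂ)) * W
          * diagonal (fun j => ((b j ^ ν : ℝ) : ℂ)) * star W) * star U := by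
    rw [hmX, hmY, hWdef]
    simp only [Matrix.star_mul, star_star, Matrix.mul_assoc, hU1, Matrix.mul_one]
  have htr : ((mpow X (1 - ν) * mpow Y ν).trace).re
      = ∑ i, ∑ j, (a i ^ (1 - ν)) * (b j ^ ν) * Complex.normSq (W i j) := by
    rw [hprod, Matrix.trace_mul_comm, ← Matrix.mul_assoc, hU2, Matrix.one_mul]
    exact trace_diag_conj W _ _
  -- doubly stochastic
  have hrow : ∀ i, ∑ j, Complex.normSq (W i j) = 1 := by
    intro i
    have h : (W * star W) i i = 1 := by rw [hW1, Matrix.one_apply_eq]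
    rw [Matrix.mul_apply] at h
    simp only [Matrix.star_apply] at h
    have h2 : ((∑ j, Complex.normSq (W i j) : ℝ) : ℂ) = 1 := by
      push_cast
      rw [← h]
      refine Finset.sum_congr rfl fun j _ => ?_
      rw [Complex.star_def, Complex.mul_conj]
    exact_mod_cast h2
  have hcol : ∀ j, ∑ i, Complex.normSq (W i j) = 1 := by
    intro j
    have h : (star W * W) j j = 1 := by rw [hW2, Matrix.one_apply_eq]
    rw [Matrix.mul_apply] at h
    simp only [Matrix.star_apply] at h
    have h2 : ((∑ i, Complex.normSq (W i j) : ℝ) : ℂ) = 1 := by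
      push_cast
      rw [← h]
      refine Finset.sum_congr rfl fun i _ => ?_
      rw [Complex.star_def, mul_comm, Complex.mul_conj]
    exact_mod_cast h2
  -- traces as sums of eigenvalues
  have hXtr : (X.trace).re = ∑ i, a i := trace_re_eq hXh
  have hYtr : (Y.trace).re = ∑ j, b j := trace_re_eq hYh
  have hapos : ∀ i, 0 < a i := hX.eigenvalues_pos
  have hbpos : ∀ j, 0 < b j := hY.eigenvalues_pos
  have hS : 0 < ∑ i, a i := Finset.sum_pos (fun i _ => hapos i) Finset.univ_nonempty
  have hT : 0 < ∑ j, b j := Finset.sum_pos (fun j _ => hbpos j) Finset.univ_nonempty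
  -- main estimate
  have hmain : ((mpow X (1 - ν) * mpow Y ν).trace).re
      ≤ (X.trace).re ^ (1 - ν) * (Y.trace).re ^ ν := by
    rw [htr, hXtr, hYtr]
    have := scalar_holder a b (fun i j => Complex.normSq (W i j))
      (fun i => (hapos i).le) (fun j => (hbpos j).le)
      (fun i j => Complex.normSq_nonneg _) hrow hcol hS hT hν0 hν1
    calc ∑ i, ∑ j, (a i ^ (1 - ν)) * (b j ^ ν) * Complex.normSq (W i j)
        = ∑ i, ∑ j, Complex.normSq (W i j) * (a i ^ (1 - ν) * b j ^ ν) := by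
          refine Finset.sum_congr rfl fun i _ => Finset.sum_congr rfl fun j _ => by ring
      _ ≤ (∑ i, a i) ^ (1 - ν) * (∑ j, b j) ^ ν := this
  unfold tsallisRel
  rw [ge_iff_le]
  gcongr
end

section
/- For positive definite matrices X, Y, the Umegaki relative entropy satisfies the Peierls–Bogoliubov inequality U(X|Y) ≥ Tr[X](log Tr[X] - log Tr[Y]), where U(X|Y) = Tr[X(log X - log Y)]. -/
open Matrix
open scoped ComplexOrder

/-- Matrix logarithm via functional calculus. -/
noncomputable def mlog {n : ℕ} (A : Matrix (Fin n) (Fin n) ℂ) : Matrix (Fin n) (Fin n) ℂ :=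
  cfc Real.log A

section PBaux
open Finset

-- Jensen for log
lemma pb_jensen_log {n : ℕ} (d b : Fin n → ℝ) (hd : ∀ j, 0 ≤ d j)
    (hd1 : ∑ j, d j = 1) (hb : ∀ j, 0 < b j) :
    ∑ j, d j * Real.log (b j) ≤ Real.log (∑ j, d j * b j) := by
  have h := strictConcaveOn_log_Ioi.concaveOn.le_map_sum (t := Finset.univ)
    (w := d) (p := b) (fun i _ => hd i) (by simpa using hd1) (fun i _ => hb i)
  simpa [smul_eq_mul] using h

-- log-sum inequality
lemma pb_log_sum {n : ℕ} (a c : Fin n → ℝ) (ha : ∀ i, 0 < a i) (hc : ∀ i, 0 < c i) :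
    (∑ i, a i) * (Real.log (∑ i, a i) - Real.log (∑ i, c i)) ≤
      ∑ i, a i * (Real.log (a i) - Real.log (c i)) := by
  rcases isEmpty_or_nonempty (Fin n) with hn | hn
  · simp
  have hSa : 0 < ∑ i, a i := Finset.sum_pos (fun i _ => ha i) univ_nonempty
  have hSc : 0 < ∑ i, c i := Finset.sum_pos (fun i _ => hc i) univ_nonempty
  set Sa := ∑ i, a i
  set Sc := ∑ i, c i
  have h := Real.convexOn_mul_log.map_sum_le (t := Finset.univ)
    (w := fun i => c i / Sc) (p := fun i => a i / c i)
    (fun i _ => div_nonneg (hc i).le hSc.le) ?_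
    (fun i _ => Set.mem_Ici.mpr (div_nonneg (ha i).le (hc i).le))
  swap
  · rw [← Finset.sum_div]
    field_simp
    rfl
  have hp : ∑ i, (c i / Sc) • (a i / c i) = Sa / Sc := by
    have he : ∀ i ∈ Finset.univ, (c i / Sc) • (a i / c i) = a i / Sc := fun i _ => by
      rw [smul_eq_mul]; field_simp [(hc i).ne', hSc.ne']
    rw [Finset.sum_congr rfl he, ← Finset.sum_div]
  rw [hp] at h
  have h2 : Sc * ((Sa / Sc) * Real.log (Sa / Sc)) ≤
      Sc * ∑ i, (c i / Sc) • ((a i / c i) * Real.log (a i / c i)) :=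
    mul_le_mul_of_nonneg_left h hSc.le
  calc Sa * (Real.log Sa - Real.log Sc)
      = Sc * ((Sa / Sc) * Real.log (Sa / Sc)) := by
        rw [Real.log_div hSa.ne' hSc.ne']; field_simp
    _ ≤ Sc * ∑ i, (c i / Sc) • ((a i / c i) * Real.log (a i / c i)) := h2
    _ = ∑ i, a i * (Real.log (a i) - Real.log (c i)) := by
        rw [Finset.mul_sum]
        refine Finset.sum_congr rfl fun i _ => ?_
        rw [smul_eq_mul, Real.log_div (ha i).ne' (hc i).ne']
        field_simp [(hc i).ne', hSc.ne']


-- entrywise trace formula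
lemma pb_trace_formula {n : ℕ} (M : Matrix (Fin n) (Fin n) ℂ) (a l : Fin n → ℝ) :
    ((diagonal (fun i => (a i : ℂ)) * M * diagonal (fun j => (l j : ℂ)) * Mᴴ).trace).re
      = ∑ i, ∑ j, a i * l j * Complex.normSq (M i j) := by
  have : (diagonal (fun i => (a i : ℂ)) * M * diagonal (fun j => (l j : ℂ)) * Mᴴ).trace
      = ∑ i, ∑ j, ((a i : ℂ) * (l j : ℂ)) * (M i j * (starRingEnd ℂ) (M i j)) := by
    simp only [Matrix.trace, Matrix.diag, Matrix.mul_apply, Matrix.diagonal_apply,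
      Matrix.conjTranspose_apply, Finset.sum_mul, Finset.mul_sum, Complex.star_def]
    refine Finset.sum_congr rfl fun i _ => ?_
    rw [Finset.sum_comm]
    refine Finset.sum_congr rfl fun j _ => ?_
    simp [Finset.sum_ite_eq, Finset.mul_sum, Finset.sum_mul]
    ring
  rw [this, Complex.re_sum]
  refine Finset.sum_congr rfl fun i _ => ?_
  rw [Complex.re_sum]
  refine Finset.sum_congr rfl fun j _ => ?_
  rw [Complex.mul_conj, ← Complex.ofReal_mul, ← Complex.ofReal_mul, Complex.ofReal_re]

lemma pb_row_sum {n : ℕ} (M : Matrix (Fin n) (Fin n) ℂ) (h : M * Mᴴ = 1) (i : Fin n) :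
    ∑ j, Complex.normSq (M i j) = 1 := by
  have h2 : (∑ j, M i j * (starRingEnd ℂ) (M i j)) = 1 := by
    have h3 := congrFun (congrFun h i) i
    simpa [Matrix.mul_apply, Matrix.conjTranspose_apply, Matrix.one_apply,
      Complex.star_def] using h3
  have h4 := congrArg Complex.re h2
  rw [Complex.re_sum] at h4
  simpa [Complex.mul_conj] using h4

lemma pb_col_sum {n : ℕ} (M : Matrix (Fin n) (Fin n) ℂ) (h : Mᴴ * M = 1) (j : Fin n) :
    ∑ i, Complex.normSq (M i j) = 1 := by
  have h2 : (∑ i, (starRingEnd ℂ) (M i j) * M i j) = 1 := by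
    have h3 := congrFun (congrFun h j) j
    simpa [Matrix.mul_apply, Matrix.conjTranspose_apply, Matrix.one_apply,
      Complex.star_def] using h3
  have h4 := congrArg Complex.re h2
  rw [Complex.re_sum] at h4
  simpa [mul_comm, Complex.mul_conj] using h4

lemma pb_conjT_mul {n : ℕ} {R : Type*} [CommRing R] [StarRing R]
    (U V : Matrix (Fin n) (Fin n) R) : (Uᴴ * V)ᴴ = Vᴴ * U := by
  rw [conjTranspose_mul, conjTranspose_conjTranspose]

lemma pb_gen_pair {n : ℕ} {R : Type*} [CommRing R] [StarRing R]
    (U V D L : Matrix (Fin n) (Fin n) R) :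
    ((U * D * Uᴴ) * (V * L * Vᴴ)).trace = (D * (Uᴴ * V) * L * (Uᴴ * V)ᴴ).trace := by
  have e1 : (U * D * Uᴴ) * (V * L * Vᴴ) = U * (D * (Uᴴ * (V * (L * Vᴴ)))) := by
    noncomm_ring
  have e2 : D * (Uᴴ * V) * L * (Uᴴ * V)ᴴ = (D * (Uᴴ * (V * (L * Vᴴ)))) * U := by
    rw [pb_conjT_mul]; noncomm_ring
  rw [e1, e2, Matrix.trace_mul_comm]

lemma pb_gen_conj {n : ℕ} {R : Type*} [CommRing R] [StarRing R]
    (U D : Matrix (Fin n) (Fin n) R) (hU : Uᴴ * U = 1) :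
    (U * D * Uᴴ).trace = D.trace := by
  rw [Matrix.trace_mul_cycle, hU, one_mul]

lemma pb_gen_unit1 {n : ℕ} {R : Type*} [CommRing R] [StarRing R]
    (U V : Matrix (Fin n) (Fin n) R) (hU : Uᴴ * U = 1) (hV : V * Vᴴ = 1) :
    (Uᴴ * V) * (Uᴴ * V)ᴴ = 1 := by
  have e : (Uᴴ * V) * (Uᴴ * V)ᴴ = Uᴴ * ((V * Vᴴ) * U) := by
    rw [pb_conjT_mul]; noncomm_ring
  rw [e, hV, one_mul, hU]

lemma pb_gen_unit2 {n : ℕ} {R : Type*} [CommRing R] [StarRing R]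
    (U V : Matrix (Fin n) (Fin n) R) (hU : U * Uᴴ = 1) (hV : Vᴴ * V = 1) :
    (Uᴴ * V)ᴴ * (Uᴴ * V) = 1 := by
  have e : (Uᴴ * V)ᴴ * (Uᴴ * V) = Vᴴ * ((U * Uᴴ) * V) := by
    rw [pb_conjT_mul]; noncomm_ring
  rw [e, hU, one_mul, hV]

lemma pb_trace_pair {n : ℕ} (U V : Matrix (Fin n) (Fin n) ℂ) (a l : Fin n → ℝ) :
    (((U * diagonal (fun i => (a i : ℂ)) * Uᴴ) *
        (V * diagonal (fun j => (l j : ℂ)) * Vᴴ)).trace).re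
      = ∑ i, ∑ j, a i * l j * Complex.normSq ((Uᴴ * V) i j) :=
  (congrArg Complex.re (pb_gen_pair U V _ _)).trans (pb_trace_formula (Uᴴ * V) a l)

lemma pb_diag_trace {n : ℕ} (a : Fin n → ℝ) :
    ((diagonal (fun i => (a i : ℂ))).trace).re = ∑ i, a i := by
  rw [trace_diagonal, Complex.re_sum]
  simp

lemma pb_sum_one {n : ℕ} (f : Fin n → Fin n → ℝ) :
    ∑ i, ∑ j, f i j * Complex.normSq ((1 : Matrix (Fin n) (Fin n) ℂ) i j) = ∑ i, f i i := by
  refine Finset.sum_congr rfl fun i _ => ?_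
  rw [Finset.sum_eq_single i]
  · simp [Matrix.one_apply]
  · intro j _ hj
    simp [Matrix.one_apply, (Ne.symm hj)]
  · simp

end PBaux

/-- Peierls–Bogoliubov inequality for the Umegaki relative entropy:
U(X|Y) ≥ Tr[X](log Tr[X] - log Tr[Y]). -/
theorem peierls_bogoliubov_umegaki {n : ℕ} (X Y : Matrix (Fin n) (Fin n) ℂ)
    (hX : X.PosDef) (hY : Y.PosDef) :
    ((X * (mlog X - mlog Y)).trace).re ≥
      (X.trace).re * (Real.log (X.trace).re - Real.log (Y.trace).re) := by
  classical
  have hXh : X.IsHermitian := hX.1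
  have hYh : Y.IsHermitian := hY.1
  set a : Fin n → ℝ := hXh.eigenvalues with ha_def
  set b : Fin n → ℝ := hYh.eigenvalues with hb_def
  set U : Matrix (Fin n) (Fin n) ℂ := ↑(hXh.eigenvectorUnitary) with hU_def
  set V : Matrix (Fin n) (Fin n) ℂ := ↑(hYh.eigenvectorUnitary) with hV_def
  have ha : ∀ i, 0 < a i := hX.eigenvalues_pos
  have hb : ∀ j, 0 < b j := hY.eigenvalues_pos
  have hUU : Uᴴ * U = 1 := hXh.eigenvectorUnitary.2.1
  have hUU' : U * Uᴴ = 1 := hXh.eigenvectorUnitary.2.2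
  have hVV : Vᴴ * V = 1 := hYh.eigenvectorUnitary.2.1
  have hVV' : V * Vᴴ = 1 := hYh.eigenvectorUnitary.2.2
  have hspecX : X = U * diagonal (fun i => (a i : ℂ)) * Uᴴ := hXh.spectral_theorem
  have hspecY : Y = V * diagonal (fun j => (b j : ℂ)) * Vᴴ := hYh.spectral_theorem
  have hmlogX : mlog X = U * diagonal (fun i => ((Real.log (a i)) : ℂ)) * Uᴴ :=
    hXh.cfc_eq Real.log
  have hmlogY : mlog Y = V * diagonal (fun j => ((Real.log (b j)) : ℂ)) * Vᴴ :=
    hYh.cfc_eq Real.log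
  -- traces
  have htX : (X.trace).re = ∑ i, a i :=
    (congrArg (fun Z : Matrix (Fin n) (Fin n) ℂ => (Z.trace).re) hspecX).trans
      ((congrArg Complex.re (pb_gen_conj U _ hUU)).trans (pb_diag_trace a))
  have htY : (Y.trace).re = ∑ j, b j :=
    (congrArg (fun Z : Matrix (Fin n) (Fin n) ℂ => (Z.trace).re) hspecY).trans
      ((congrArg Complex.re (pb_gen_conj V _ hVV)).trans (pb_diag_trace b))
  have h1 : ((X * mlog X).trace).re = ∑ i, a i * Real.log (a i) := by
    have e : X * mlog X = (U * diagonal (fun i => (a i : ℂ)) * Uᴴ) *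
        (U * diagonal (fun i => ((Real.log (a i)) : ℂ)) * Uᴴ) := by
      rw [hmlogX, ← hspecX]
    have := (congrArg (fun Z : Matrix (Fin n) (Fin n) ℂ => (Z.trace).re) e).trans
      (pb_trace_pair U U a (fun i => Real.log (a i)))
    rw [this, hUU]
    exact pb_sum_one (fun i j => a i * Real.log (a j))
  have h2 : ((X * mlog Y).trace).re
      = ∑ i, ∑ j, a i * Real.log (b j) * Complex.normSq ((Uᴴ * V) i j) := by
    have e : X * mlog Y = (U * diagonal (fun i => (a i : ℂ)) * Uᴴ) *
        (V * diagonal (fun j => ((Real.log (b j)) : ℂ)) * Vᴴ) := by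
      rw [hmlogY, ← hspecX]
    exact (congrArg (fun Z : Matrix (Fin n) (Fin n) ℂ => (Z.trace).re) e).trans
      (pb_trace_pair U V a (fun j => Real.log (b j)))
  have hsplit : ((X * (mlog X - mlog Y)).trace).re
      = ((X * mlog X).trace).re - ((X * mlog Y).trace).re := by
    rw [mul_sub, Matrix.trace_sub, Complex.sub_re]
  -- the doubly stochastic weights
  set d : Fin n → Fin n → ℝ := fun i j => Complex.normSq ((Uᴴ * V) i j) with hd_def
  have hd : ∀ i j, 0 ≤ d i j := fun i j => Complex.normSq_nonneg _
  have hrow : ∀ i, ∑ j, d i j = 1 :=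
    pb_row_sum (Uᴴ * V) (pb_gen_unit1 U V hUU hVV') 
  have hcol : ∀ j, ∑ i, d i j = 1 :=
    pb_col_sum (Uᴴ * V) (pb_gen_unit2 U V hUU' hVV)
  set c : Fin n → ℝ := fun i => ∑ j, d i j * b j with hc_def
  have hc : ∀ i, 0 < c i := by
    intro i
    have hne : ∑ j, d i j ≠ 0 := by rw [hrow i]; norm_num
    obtain ⟨j, -, hj⟩ := Finset.exists_ne_zero_of_sum_ne_zero hne
    refine Finset.sum_pos' (fun j _ => mul_nonneg (hd i j) (hb j).le) ⟨j, Finset.mem_univ j, ?_⟩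
    exact mul_pos (lt_of_le_of_ne (hd i j) (Ne.symm hj)) (hb j)
  have hsumc : ∑ i, c i = ∑ j, b j := by
    rw [hc_def]
    simp only []
    rw [Finset.sum_comm]
    refine Finset.sum_congr rfl fun j _ => ?_
    rw [← Finset.sum_mul, hcol j, one_mul]
  have h2bound : (∑ i, ∑ j, a i * Real.log (b j) * d i j) ≤ ∑ i, a i * Real.log (c i) := by
    refine Finset.sum_le_sum fun i _ => ?_
    have e : ∑ j, a i * Real.log (b j) * d i j = a i * ∑ j, d i j * Real.log (b j) := by
      rw [Finset.mul_sum]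
      exact Finset.sum_congr rfl fun j _ => by ring
    rw [e]
    exact mul_le_mul_of_nonneg_left (pb_jensen_log (d i) b (hd i) (hrow i) hb) (ha i).le
  have hls := pb_log_sum a c ha hc
  have hsplit2 : ∑ i, a i * (Real.log (a i) - Real.log (c i))
      = (∑ i, a i * Real.log (a i)) - ∑ i, a i * Real.log (c i) := by
    rw [← Finset.sum_sub_distrib]
    exact Finset.sum_congr rfl fun i _ => by ring
  have hlogc : Real.log (∑ i, c i) = Real.log (∑ j, b j) := by rw [hsumc]
  have final : ((X * (mlog X - mlog Y)).trace).re
      ≥ (X.trace).re * (Real.log (X.trace).re - Real.log (Y.trace).re) := by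
    rw [hsplit, h1, h2, htX, htY]
    rw [hsplit2, hlogc] at hls
    linarith [h2bound, hls]
  exact final
end

section
/- The matrix inequality X - Y + I - Y^{-1/2} X Y^{-1/2} ≥ 0 fails in general for positive definite X, Y with I ≤ Y ≤ X: for X = [[2,1],[1,4]] and Y = diag(1,2), the Hermitian matrix X - Y + I - Y^{-1/2} X Y^{-1/2} has a negative eigenvalue. -/
open Matrix
open scoped ComplexOrder

noncomputable def cc : ℝ := (Real.sqrt 2)⁻¹

lemma specY : spectrum ℝ (!![1,0;0,2] : Matrix (Fin 2) (Fin 2) ℂ) ⊆ {1, 2} := by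
  intro x hx
  rw [spectrum.mem_iff] at hx
  by_contra h
  simp only [Set.mem_insert_iff, Set.mem_singleton_iff, not_or] at h
  apply hx
  rw [Matrix.isUnit_iff_isUnit_det]
  have : (algebraMap ℝ (Matrix (Fin 2) (Fin 2) ℂ) x - !![1,0;0,2]).det
      = ((x:ℂ) - 1) * ((x:ℂ) - 2) := by
    simp [Matrix.det_fin_two, Matrix.algebraMap_matrix_apply]
  rw [this]
  exact (mul_ne_zero (sub_ne_zero.2 (by exact_mod_cast h.1))
    (sub_ne_zero.2 (by exact_mod_cast h.2))).isUnit

lemma hYsa : IsSelfAdjoint (!![1,0;0,2] : Matrix (Fin 2) (Fin 2) ℂ) := by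
  rw [_root_.IsSelfAdjoint, Matrix.star_eq_conjTranspose]
  ext i j
  fin_cases i <;> fin_cases j <;> simp

lemma mpowY : cfc (fun x : ℝ => x ^ (-(1/2) : ℝ)) (!![1,0;0,2] : Matrix (Fin 2) (Fin 2) ℂ)
    = !![1,0;0,(cc:ℂ)] := by
  have h1 : cfc (fun x : ℝ => x ^ (-(1/2) : ℝ)) (!![1,0;0,2] : Matrix (Fin 2) (Fin 2) ℂ)
      = cfc (fun x : ℝ => (2 - cc) + (cc - 1) * x) (!![1,0;0,2] : Matrix (Fin 2) (Fin 2) ℂ) := by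
    apply cfc_congr
    intro x hx
    rcases specY hx with h | h
    · subst h; simp [Real.one_rpow]; ring
    · simp only [Set.mem_singleton_iff] at h
      subst h
      have : (2:ℝ) ^ (-(1/2) : ℝ) = cc := by
        rw [Real.rpow_neg (by norm_num), cc, Real.sqrt_eq_rpow]
      show (2:ℝ) ^ (-(1/2):ℝ) = 2 - cc + (cc - 1) * 2
      rw [this]; ring
  rw [h1, cfc_const_add _ _ _ (by fun_prop) hYsa, cfc_const_mul_id _ _ hYsa]
  ext i j
  fin_cases i <;> fin_cases j <;>
    simp [Matrix.algebraMap_matrix_apply, Matrix.smul_apply] <;> ring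

lemma aux1 : (!![2,1;1,4] : Matrix (Fin 2) (Fin 2) ℂ)
    = Matrix.diagonal ![1,3] + (!![1,1;0,0] : Matrix (Fin 2) (Fin 2) ℂ)ᴴ * !![1,1;0,0] := by
  ext i j; fin_cases i <;> fin_cases j <;>
    simp [Matrix.mul_apply, Fin.sum_univ_two, Matrix.diagonal] <;> norm_num

/-- The matrix inequality X - Y + I - Y^{-1/2} X Y^{-1/2} ≥ 0 fails for
X = [[2,1],[1,4]], Y = diag(1,2) even though I ≤ Y ≤ X. -/
theorem matrix_inequality_counterexample :
    ∃ (X Y : Matrix (Fin 2) (Fin 2) ℂ), X = !![2, 1; 1, 4] ∧ Y = !![1, 0; 0, 2] ∧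
      X.PosDef ∧ Y.PosDef ∧ (Y - 1).PosSemidef ∧ (X - Y).PosSemidef ∧
      ¬ (X - Y + 1 - mpow Y (-(1/2)) * X * mpow Y (-(1/2))).PosSemidef := by
  refine ⟨!![2,1;1,4], !![1,0;0,2], rfl, rfl, ?_, ?_, ?_, ?_, ?_⟩
  · rw [aux1]
    exact (Matrix.posDef_diagonal_iff.2 (by intro i; fin_cases i <;> simp)).add_posSemidef
      (Matrix.posSemidef_conjTranspose_mul_self _)
  · have : (!![1,0;0,2] : Matrix (Fin 2) (Fin 2) ℂ) = Matrix.diagonal ![1,2] := by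
      ext i j; fin_cases i <;> fin_cases j <;> simp [Matrix.diagonal]
    rw [this]
    exact Matrix.posDef_diagonal_iff.2 (by intro i; fin_cases i <;> simp)
  · have : (!![1,0;0,2] : Matrix (Fin 2) (Fin 2) ℂ) - 1 = Matrix.diagonal ![0,1] := by
      ext i j; fin_cases i <;> fin_cases j <;>
        simp [Matrix.diagonal, Matrix.one_apply] <;> norm_num
    rw [this]
    exact Matrix.posSemidef_diagonal_iff.2 (by intro i; fin_cases i <;> simp)
  · have : (!![2,1;1,4] : Matrix (Fin 2) (Fin 2) ℂ) - !![1,0;0,2]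
        = Matrix.diagonal ![0,1] + (!![1,1;0,0] : Matrix (Fin 2) (Fin 2) ℂ)ᴴ * !![1,1;0,0] := by
      ext i j; fin_cases i <;> fin_cases j <;>
        simp [Matrix.mul_apply, Fin.sum_univ_two, Matrix.diagonal] <;> norm_num
    rw [this]
    exact (Matrix.posSemidef_diagonal_iff.2 (by intro i; fin_cases i <;> simp)).add
      (Matrix.posSemidef_conjTranspose_mul_self _)
  · intro hP
    have hB : mpow (!![1,0;0,2] : Matrix (Fin 2) (Fin 2) ℂ) (-(1/2)) = !![1,0;0,(cc:ℂ)] := mpowY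
    rw [hB] at hP
    have hM : (!![2,1;1,4] : Matrix (Fin 2) (Fin 2) ℂ) - !![1,0;0,2] + 1
        - !![1,0;0,(cc:ℂ)] * !![2,1;1,4] * !![1,0;0,(cc:ℂ)]
        = !![0, 1-(cc:ℂ); 1-(cc:ℂ), (3:ℂ) - 4*(cc:ℂ)*(cc:ℂ)] := by
      ext i j; fin_cases i <;> fin_cases j <;>
        simp [Matrix.mul_apply, Fin.sum_univ_two, Matrix.one_apply] <;> ring
    rw [hM] at hP
    have hv := hP.dotProduct_mulVec_nonneg ![-2, 1]
    have hc : star (![-2, 1] : Fin 2 → ℂ) ⬝ᵥ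
        ((!![0, 1-(cc:ℂ); 1-(cc:ℂ), (3:ℂ) - 4*(cc:ℂ)*(cc:ℂ)]) *ᵥ ![-2, 1])
        = ((4*cc - 4*cc*cc - 1 : ℝ) : ℂ) := by
      simp [dotProduct, Matrix.mulVec, Fin.sum_univ_two, Complex.conj_ofNat]
      ring
    rw [hc] at hv
    rw [Complex.zero_le_real] at hv
    have hs : Real.sqrt 2 * Real.sqrt 2 = 2 := Real.mul_self_sqrt (by norm_num)
    have hs' : (1:ℝ) < Real.sqrt 2 := by nlinarith [Real.sqrt_nonneg 2]
    have hcc : cc * Real.sqrt 2 = 1 := by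
      rw [cc]; field_simp
    have hccpos : 0 < cc := by rw [cc]; positivity
    nlinarith [hv, hcc, hs, hs', hccpos]
end

section
/- The uncertainty-type inequality I_ρ(A) I_ρ(B) ≥ (1/4)|Tr[ρ[A,B]]|² for Wigner–Yanase skew information fails: for ρ = diag(3/4, 1/4), A = [[0,i],[-i,0]], B = [[0,1],[1,0]], one has I_ρ(A) I_ρ(B) = (1 - √3/2)² < 1/4 = (1/4)|Tr[ρ[A,B]]|². -/
open Matrix
open scoped ComplexOrder

/-- Wigner–Yanase skew information I_ρ(H) = Tr[ρH²] - Tr[ρ^{1/2} H ρ^{1/2} H]. -/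
noncomputable def wySkew {n : ℕ} (ρ H : Matrix (Fin n) (Fin n) ℂ) : ℝ :=
  ((ρ * (H * H)).trace).re - ((mpow ρ (1/2) * H * mpow ρ (1/2) * H).trace).re

lemma mpow_half_mul_self {m : ℕ} (S : Matrix (Fin m) (Fin m) ℂ) (hS : S.PosSemidef) :
    mpow (S * S) (1/2) = S := by
  have hsa : IsSelfAdjoint S := hS.isHermitian
  have hcont : Continuous (fun x : ℝ => x ^ (1/2 : ℝ)) := by
    rw [continuous_iff_continuousAt]
    exact fun x => Real.continuousAt_rpow_const x _ (Or.inr (by norm_num))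
  have h1 : S * S = cfc (fun x : ℝ => x ^ 2) S := by
    rw [cfc_pow_id S 2, sq]
  rw [mpow, h1, ← cfc_comp (fun x : ℝ => x ^ (1/2 : ℝ)) (fun x : ℝ => x ^ 2) S hsa
    hcont.continuousOn (by fun_prop)]
  conv_rhs => rw [← cfc_id ℝ S hsa]
  apply cfc_congr
  intro x hx
  have hx0 : 0 ≤ x := by
    rw [Matrix.IsHermitian.spectrum_real_eq_range_eigenvalues hS.isHermitian] at hx
    obtain ⟨i, rfl⟩ := hx
    exact hS.eigenvalues_nonneg i
  show ((x ^ 2 : ℝ)) ^ (1/2 : ℝ) = x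
  rw [← Real.rpow_natCast x 2, ← Real.rpow_mul hx0]
  norm_num

/-- Counterexample to I_ρ(A) I_ρ(B) ≥ (1/4)|Tr[ρ[A,B]]|²:
ρ = diag(3/4,1/4), A = [[0,i],[-i,0]], B = [[0,1],[1,0]] give
I_ρ(A) I_ρ(B) = (1 - √3/2)² < 1/4 = (1/4)|Tr[ρ[A,B]]|². -/
theorem skew_uncertainty_counterexample :
    ∃ (ρ A B : Matrix (Fin 2) (Fin 2) ℂ),
      ρ = !![3/4, 0; 0, 1/4] ∧ A = !![0, Complex.I; -Complex.I, 0] ∧ B = !![0, 1; 1, 0] ∧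
      ρ.PosSemidef ∧ ρ.trace = 1 ∧ A.IsHermitian ∧ B.IsHermitian ∧
      wySkew ρ A * wySkew ρ B = (1 - Real.sqrt 3 / 2) ^ 2 ∧
      (1 - Real.sqrt 3 / 2) ^ 2 < 1/4 ∧
      (1/4) * ‖(ρ * (A * B - B * A)).trace‖ ^ 2 = 1/4 := by
  refine ⟨!![3/4, 0; 0, 1/4], !![0, Complex.I; -Complex.I, 0], !![0, 1; 1, 0],
    rfl, rfl, rfl, ?_, ?_, ?_, ?_, ?_, ?_, ?_⟩
  case _ =>
    have : (!![3/4, 0; 0, 1/4] : Matrix (Fin 2) (Fin 2) ℂ)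
        = Matrix.diagonal ![3/4, 1/4] := by
      ext i j; fin_cases i <;> fin_cases j <;> rfl
    rw [this]
    refine Matrix.posSemidef_diagonal_iff.mpr fun i => ?_
    fin_cases i
    · simpa using Complex.zero_le_real.mpr (by norm_num : (0:ℝ) ≤ 3/4)
    · simpa using Complex.zero_le_real.mpr (by norm_num : (0:ℝ) ≤ 1/4)
  case _ => simp [Matrix.trace_fin_two]; norm_num
  case _ =>
    ext i j
    fin_cases i <;> fin_cases j <;>
      simp [Matrix.conjTranspose_apply, Complex.conj_I]
  case _ =>
    ext i j
    fin_cases i <;> fin_cases j <;> simp [Matrix.conjTranspose_apply]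
  case _ =>
    set ρ : Matrix (Fin 2) (Fin 2) ℂ := !![3/4, 0; 0, 1/4] with hρ
    set A : Matrix (Fin 2) (Fin 2) ℂ := !![0, Complex.I; -Complex.I, 0] with hA
    set B : Matrix (Fin 2) (Fin 2) ℂ := !![0, 1; 1, 0] with hB
    set S : Matrix (Fin 2) (Fin 2) ℂ := !![(Real.sqrt 3 : ℂ) / 2, 0; 0, 1/2] with hSdef
    have h3 : (0:ℝ) ≤ Real.sqrt 3 / 2 := by positivity
    have e1 : ((Real.sqrt 3 : ℂ)) / 2 = ((Real.sqrt 3 / 2 : ℝ) : ℂ) := by push_cast; ring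
    have hS : S.PosSemidef := by
      have hdiag : S = Matrix.diagonal ![((Real.sqrt 3 : ℂ)) / 2, 1/2] := by
        ext i j; fin_cases i <;> fin_cases j <;> rfl
      rw [hdiag]
      refine Matrix.posSemidef_diagonal_iff.mpr fun i => ?_
      fin_cases i
      · simp only [Matrix.cons_val_zero]
        rw [e1]
        exact Complex.zero_le_real.mpr h3
      · simp only [Matrix.cons_val_one, Matrix.head_cons]
        rw [show (1/2 : ℂ) = ((1/2 : ℝ) : ℂ) by norm_num]
        exact Complex.zero_le_real.mpr (by norm_num)
    have h33 : (Real.sqrt 3 : ℂ) * (Real.sqrt 3 : ℂ) = 3 := by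
      rw [← Complex.ofReal_mul, Real.mul_self_sqrt (by norm_num)]; norm_num
    have hSS : S * S = ρ := by
      rw [hSdef, hρ, Matrix.mul_fin_two, div_mul_div_comm, h33]
      norm_num
    have hmp : mpow ρ (1/2) = S := by rw [← hSS, mpow_half_mul_self _ hS]
    have h1 : ((S * A * S * A).trace) = (Real.sqrt 3 : ℂ)/2 := by
      simp [hSdef, hA, Matrix.trace_fin_two, Matrix.mul_apply, Fin.sum_univ_two]
      ring_nf
      simp [Complex.I_sq]
      ring
    have h2 : ((S * B * S * B).trace) = (Real.sqrt 3 : ℂ)/2 := by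
      simp [hSdef, hB, Matrix.trace_fin_two, Matrix.mul_apply, Fin.sum_univ_two]
      ring
    have h3' : ((ρ * (A * A)).trace) = 1 := by
      simp [hρ, hA, Matrix.trace_fin_two, Matrix.mul_apply, Fin.sum_univ_two]
      ring_nf
    have h4 : ((ρ * (B * B)).trace) = 1 := by
      simp [hρ, hB, Matrix.trace_fin_two, Matrix.mul_apply, Fin.sum_univ_two]
      ring
    have hre : ((Real.sqrt 3 : ℂ)/2).re = Real.sqrt 3 / 2 := by
      rw [e1]; exact Complex.ofReal_re _
    have hwA : wySkew ρ A = 1 - Real.sqrt 3 / 2 := by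
      rw [wySkew, hmp, h1, h3', hre]; norm_num
    have hwB : wySkew ρ B = 1 - Real.sqrt 3 / 2 := by
      rw [wySkew, hmp, h2, h4, hre]; norm_num
    rw [hwA, hwB, sq]
  case _ =>
    nlinarith [Real.sq_sqrt (show (0:ℝ) ≤ 3 by norm_num), Real.sqrt_nonneg 3]
  case _ =>
    have h5 : ((!![3/4, 0; 0, 1/4] : Matrix (Fin 2) (Fin 2) ℂ) *
        (!![0, Complex.I; -Complex.I, 0] * !![0, 1; 1, 0] -
         !![0, 1; 1, 0] * !![0, Complex.I; -Complex.I, 0])).trace = Complex.I := by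
      simp [Matrix.trace_fin_two, Matrix.mul_apply, Fin.sum_univ_two, Matrix.sub_apply]
      ring
    rw [h5, Complex.norm_I]
    norm_num
end

section
/- Let ρ be a density matrix and f, g operator monotone functions forming a monotonic pair (i.e., (f(a)-f(b))(g(a)-g(b)) ≥ 0 for all a,b in the spectrum domain). For Hermitian matrices A, B, the (f,g)-skew informations satisfy I_{ρ,(f,g)}(A) I_{ρ,(f,g)}(B) ≥ |Re{Corr_{ρ,(f,g)}(A,B)}|², where Corr_{ρ,(f,g)}(X,Y) = Tr[f(ρ)g(ρ)X*Y] - Tr[f(ρ)X*g(ρ)Y] and I_{ρ,(f,g)}(H) = Corr_{ρ,(f,g)}(H,H). -/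
open Matrix
open scoped ComplexOrder

/-- (f,g)-correlation measure Corr_{ρ,(f,g)}(X,Y). -/
noncomputable def corrFG {n : ℕ} (f g : ℝ → ℝ) (ρ X Y : Matrix (Fin n) (Fin n) ℂ) : ℂ :=
  (cfc f ρ * cfc g ρ * Xᴴ * Y).trace - (cfc f ρ * Xᴴ * cfc g ρ * Y).trace

lemma cs_aux {ι : Type*} [Fintype ι] (c : ι → ι → ℝ) (hc : ∀ i j, 0 ≤ c i j) (u v : ι → ι → ℂ) :
    (∑ i, ∑ j, c i j * ((starRingEnd ℂ (u i j)) * v i j).re) ^ 2 ≤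
    (∑ i, ∑ j, c i j * ((starRingEnd ℂ (u i j)) * u i j).re) *
    (∑ i, ∑ j, c i j * ((starRingEnd ℂ (v i j)) * v i j).re) := by
  have habs : ∀ (w : ι → ι → ℂ) i j,
      c i j * ((starRingEnd ℂ (w i j)) * w i j).re
        = (Real.sqrt (c i j) * ‖w i j‖) ^ 2 := by
    intro w i j
    rw [mul_pow, Real.sq_sqrt (hc i j), Complex.sq_norm]
    simp [Complex.mul_re, Complex.normSq_apply, mul_comm]
  rw [← Finset.sum_product' (f := fun i j => c i j * ((starRingEnd ℂ (u i j)) * v i j).re),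
      ← Finset.sum_product' (f := fun i j => c i j * ((starRingEnd ℂ (u i j)) * u i j).re),
      ← Finset.sum_product' (f := fun i j => c i j * ((starRingEnd ℂ (v i j)) * v i j).re)]
  set s := (Finset.univ : Finset (ι × ι))
  have hb : |∑ p ∈ s, c p.1 p.2 * ((starRingEnd ℂ (u p.1 p.2)) * v p.1 p.2).re|
      ≤ ∑ p ∈ s, (Real.sqrt (c p.1 p.2) * ‖u p.1 p.2‖) *
          (Real.sqrt (c p.1 p.2) * ‖v p.1 p.2‖) := by
    refine (Finset.abs_sum_le_sum_abs _ _).trans (Finset.sum_le_sum fun p _ => ?_)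
    rw [abs_mul, abs_of_nonneg (hc p.1 p.2)]
    have h1 : |((starRingEnd ℂ (u p.1 p.2)) * v p.1 p.2).re|
        ≤ ‖u p.1 p.2‖ * ‖v p.1 p.2‖ := by
      calc |((starRingEnd ℂ (u p.1 p.2)) * v p.1 p.2).re|
          ≤ ‖(starRingEnd ℂ (u p.1 p.2)) * v p.1 p.2‖ := Complex.abs_re_le_norm _
        _ = ‖u p.1 p.2‖ * ‖v p.1 p.2‖ := by
            rw [norm_mul, Complex.norm_conj]
    calc c p.1 p.2 * |((starRingEnd ℂ (u p.1 p.2)) * v p.1 p.2).re|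
        ≤ c p.1 p.2 * (‖u p.1 p.2‖ * ‖v p.1 p.2‖) :=
          mul_le_mul_of_nonneg_left h1 (hc p.1 p.2)
      _ = _ := by
          conv_rhs => rw [mul_mul_mul_comm, Real.mul_self_sqrt (hc p.1 p.2)]
  calc (∑ p ∈ s, c p.1 p.2 * ((starRingEnd ℂ (u p.1 p.2)) * v p.1 p.2).re) ^ 2
      = |∑ p ∈ s, c p.1 p.2 * ((starRingEnd ℂ (u p.1 p.2)) * v p.1 p.2).re| ^ 2 := (sq_abs _).symm
    _ ≤ (∑ p ∈ s, (Real.sqrt (c p.1 p.2) * ‖u p.1 p.2‖) *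
          (Real.sqrt (c p.1 p.2) * ‖v p.1 p.2‖)) ^ 2 :=
          pow_le_pow_left₀ (abs_nonneg _) hb 2
    _ ≤ (∑ p ∈ s, (Real.sqrt (c p.1 p.2) * ‖u p.1 p.2‖) ^ 2) *
        (∑ p ∈ s, (Real.sqrt (c p.1 p.2) * ‖v p.1 p.2‖) ^ 2) :=
          Finset.sum_mul_sq_le_sq_mul_sq s _ _
    _ = _ := by
        congr 1 <;> exact Finset.sum_congr rfl fun p _ => (habs _ p.1 p.2).symm

lemma sym_aux {ι : Type*} [Fintype ι] (t : ι → ι → ℝ) (a b : ι → ι → ℂ)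
    (ha : ∀ i j, a j i = starRingEnd ℂ (a i j)) (hb : ∀ i j, b j i = starRingEnd ℂ (b i j)) :
    2 * (∑ i, ∑ j, t i j * ((starRingEnd ℂ (a i j)) * b i j).re)
      = ∑ i, ∑ j, (t i j + t j i) * ((starRingEnd ℂ (a i j)) * b i j).re := by
  have hterm : ∀ i j, t j i * ((starRingEnd ℂ (a j i)) * b j i).re
      = t j i * ((starRingEnd ℂ (a i j)) * b i j).re := by
    intro i j
    rw [ha, hb]
    congr 1
    simp [Complex.mul_re, Complex.conj_re, Complex.conj_im]
  calc 2 * (∑ i, ∑ j, t i j * ((starRingEnd ℂ (a i j)) * b i j).re)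
      = (∑ i, ∑ j, t i j * ((starRingEnd ℂ (a i j)) * b i j).re)
        + (∑ i, ∑ j, t i j * ((starRingEnd ℂ (a i j)) * b i j).re) := two_mul _
    _ = (∑ i, ∑ j, t i j * ((starRingEnd ℂ (a i j)) * b i j).re)
        + (∑ i, ∑ j, t j i * ((starRingEnd ℂ (a j i)) * b j i).re) := by
          congr 1
          exact Finset.sum_comm
    _ = (∑ i, ∑ j, t i j * ((starRingEnd ℂ (a i j)) * b i j).re)
        + (∑ i, ∑ j, t j i * ((starRingEnd ℂ (a i j)) * b i j).re) := by
          congr 1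
          exact Finset.sum_congr rfl fun i _ => Finset.sum_congr rfl fun j _ => hterm i j
    _ = _ := by
          rw [← Finset.sum_add_distrib]
          refine Finset.sum_congr rfl fun i _ => ?_
          rw [← Finset.sum_add_distrib]
          exact Finset.sum_congr rfl fun j _ => by ring

lemma tdiag1 {n : ℕ} (d e : Fin n → ℂ) (P Q : Matrix (Fin n) (Fin n) ℂ) :
    (Matrix.diagonal d * Matrix.diagonal e * P * Q).trace
      = ∑ i, ∑ j, d i * e i * P i j * Q j i := by
  simp [Matrix.trace, Matrix.diag, Matrix.mul_apply, Matrix.diagonal_apply, Finset.mul_sum]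

lemma tdiag2 {n : ℕ} (d e : Fin n → ℂ) (P Q : Matrix (Fin n) (Fin n) ℂ) :
    (Matrix.diagonal d * P * Matrix.diagonal e * Q).trace
      = ∑ i, ∑ j, d i * P i j * e j * Q j i := by
  simp [Matrix.trace, Matrix.diag, Matrix.mul_apply, Matrix.diagonal_apply, Finset.mul_sum]

/-- For a monotonic pair (f,g) of nonnegative functions, the (f,g)-skew informations
satisfy I_{ρ,(f,g)}(A) I_{ρ,(f,g)}(B) ≥ |Re Corr_{ρ,(f,g)}(A,B)|². -/
theorem fg_skew_information_inequality {n : ℕ} (ρ A B : Matrix (Fin n) (Fin n) ℂ)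
    (hρ : ρ.PosSemidef) (hρ1 : ρ.trace = 1)
    (f g : ℝ → ℝ) (hf : ∀ x : ℝ, 0 ≤ x → 0 ≤ f x) (hg : ∀ x : ℝ, 0 ≤ x → 0 ≤ g x)
    (hfg : ∀ a b : ℝ, 0 ≤ a → 0 ≤ b → 0 ≤ (f a - f b) * (g a - g b))
    (hA : A.IsHermitian) (hB : B.IsHermitian) :
    (corrFG f g ρ A A).re * (corrFG f g ρ B B).re ≥ |(corrFG f g ρ A B).re| ^ 2 := by
  have hH : ρ.IsHermitian := hρ.1
  set U : Matrix (Fin n) (Fin n) ℂ := (hH.eigenvectorUnitary : Matrix (Fin n) (Fin n) ℂ) with hUdef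
  have h1 : star U * U = 1 := Unitary.star_mul_self_of_mem (SetLike.coe_mem _)
  have h2 : U * star U = 1 := Unitary.mul_star_self_of_mem (SetLike.coe_mem _)
  have h1' : ∀ W : Matrix (Fin n) (Fin n) ℂ, star U * (U * W) = W := fun W => by
    rw [← mul_assoc, h1, one_mul]
  have h2' : ∀ W : Matrix (Fin n) (Fin n) ℂ, U * (star U * W) = W := fun W => by
    rw [← mul_assoc, h2, one_mul]
  set ev : Fin n → ℝ := hH.eigenvalues with hevdef
  have hev : ∀ i, 0 ≤ ev i := hρ.eigenvalues_nonneg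
  have hcfc : ∀ h : ℝ → ℝ,
      cfc h ρ = U * Matrix.diagonal (fun i => ((h (ev i) : ℝ) : ℂ)) * star U := by
    intro h
    rw [hH.cfc_eq h]
    rfl
  -- conjugated matrices
  set A' : Matrix (Fin n) (Fin n) ℂ := star U * A * U with hA'def
  set B' : Matrix (Fin n) (Fin n) ℂ := star U * B * U with hB'def
  have hconjH : ∀ (M : Matrix (Fin n) (Fin n) ℂ), star U * Mᴴ * U = (star U * M * U)ᴴ := by
    intro M
    simp [conjTranspose_mul, Matrix.star_eq_conjTranspose, mul_assoc]
  have hA'herm : A'ᴴ = A' := by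
    rw [hA'def, ← hconjH, hA.eq]
  have hB'herm : B'ᴴ = B' := by
    rw [hB'def, ← hconjH, hB.eq]
  -- trace rearrangement
  have tr1 : ∀ (X Y M N : Matrix (Fin n) (Fin n) ℂ),
      (U * X * star U * (U * Y * star U) * Mᴴ * N).trace
        = (X * Y * (star U * Mᴴ * U) * (star U * N * U)).trace := by
    intro X Y M N
    have e : U * X * star U * (U * Y * star U) * Mᴴ * N
        = U * (X * Y * (star U * Mᴴ * U) * (star U * N * U)) * star U := by
      simp only [mul_assoc, h1', h2', h1, h2, mul_one]
    rw [e, Matrix.trace_mul_cycle, ← mul_assoc, h1, one_mul]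
  have tr2 : ∀ (X Y M N : Matrix (Fin n) (Fin n) ℂ),
      (U * X * star U * Mᴴ * (U * Y * star U) * N).trace
        = (X * (star U * Mᴴ * U) * Y * (star U * N * U)).trace := by
    intro X Y M N
    have e : U * X * star U * Mᴴ * (U * Y * star U) * N
        = U * (X * (star U * Mᴴ * U) * Y * (star U * N * U)) * star U := by
      simp only [mul_assoc, h1', h2', h1, h2, mul_one]
    rw [e, Matrix.trace_mul_cycle, ← mul_assoc, h1, one_mul]
  -- main expansion of corrFG
  have expand : ∀ (M N : Matrix (Fin n) (Fin n) ℂ),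
      (corrFG f g ρ M N).re
        = ∑ i, ∑ j, (f (ev i) * g (ev i) - f (ev i) * g (ev j)) *
            ((starRingEnd ℂ ((star U * M * U) j i)) * ((star U * N * U) j i)).re := by
    intro M N
    have e1 : (cfc f ρ * cfc g ρ * Mᴴ * N).trace
        = ∑ i, ∑ j, ((f (ev i) : ℂ)) * ((g (ev i) : ℂ)) * (star U * M * U)ᴴ i j
            * (star U * N * U) j i := by
      rw [hcfc f, hcfc g, tr1, hconjH, tdiag1]
    have e2 : (cfc f ρ * Mᴴ * cfc g ρ * N).trace
        = ∑ i, ∑ j, ((f (ev i) : ℂ)) * (star U * M * U)ᴴ i j * ((g (ev j) : ℂ))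
            * (star U * N * U) j i := by
      rw [hcfc f, hcfc g, tr2, hconjH, tdiag2]
    rw [corrFG, Complex.sub_re, e1, e2]
    rw [Complex.re_sum, Complex.re_sum, ← Finset.sum_sub_distrib]
    refine Finset.sum_congr rfl fun i _ => ?_
    rw [Complex.re_sum, Complex.re_sum, ← Finset.sum_sub_distrib]
    refine Finset.sum_congr rfl fun j _ => ?_
    rw [Matrix.conjTranspose_apply]
    simp [Complex.mul_re, Complex.sub_re, Complex.conj_re, Complex.conj_im,
      Complex.ofReal_re, Complex.ofReal_im]
    ring
  -- abbreviations
  set a : Fin n → Fin n → ℂ := fun i j => A' j i with hadef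
  set b : Fin n → Fin n → ℂ := fun i j => B' j i with hbdef
  have ha : ∀ i j, a j i = starRingEnd ℂ (a i j) := by
    intro i j
    have := congrFun (congrFun hA'herm.symm i) j
    rw [Matrix.conjTranspose_apply] at this
    simpa [hadef] using this
  have hb : ∀ i j, b j i = starRingEnd ℂ (b i j) := by
    intro i j
    have := congrFun (congrFun hB'herm.symm i) j
    rw [Matrix.conjTranspose_apply] at this
    simpa [hbdef] using this
  set t : Fin n → Fin n → ℝ := fun i j => f (ev i) * g (ev i) - f (ev i) * g (ev j) with htdef
  set c : Fin n → Fin n → ℝ := fun i j => t i j + t j i with hcdef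
  have hc : ∀ i j, 0 ≤ c i j := by
    intro i j
    have := hfg (ev i) (ev j) (hev i) (hev j)
    simp only [hcdef, htdef]
    nlinarith [this]
  have key := cs_aux c hc a b
  have sAB := sym_aux t a b ha hb
  have sAA := sym_aux t a a ha ha
  have sBB := sym_aux t b b hb hb
  have eAB : (corrFG f g ρ A B).re = ∑ i, ∑ j, t i j * ((starRingEnd ℂ (a i j)) * b i j).re :=
    expand A B
  have eAA : (corrFG f g ρ A A).re = ∑ i, ∑ j, t i j * ((starRingEnd ℂ (a i j)) * a i j).re :=
    expand A A
  have eBB : (corrFG f g ρ B B).re = ∑ i, ∑ j, t i j * ((starRingEnd ℂ (b i j)) * b i j).re :=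
    expand B B
  rw [ge_iff_le, sq_abs, eAB, eAA, eBB]
  simp only [hcdef] at key
  rw [← sAB, ← sAA, ← sBB] at key
  nlinarith [key]
end

section
/- For a density matrix ρ with a monotonic pair (f,g) of nonnegative functions, the sesquilinear form Corr_{ρ,(f,g)}(X,Y) = Tr[f(ρ)g(ρ)X*Y] - Tr[f(ρ)X*g(ρ)Y] satisfies Corr_{ρ,(f,g)}(A,A) ≥ 0 for every Hermitian matrix A. -/
open Matrix
open scoped ComplexOrder

private lemma double_sum_nonneg' {n : ℕ} (a : Fin n → ℝ) (m : Fin n → Fin n → ℝ)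
    (hm : ∀ i j, 0 ≤ m i j) (hsym : ∀ i j, m i j = m j i)
    (f g : ℝ → ℝ) (ha : ∀ i, 0 ≤ a i)
    (hfg : ∀ x y : ℝ, 0 ≤ x → 0 ≤ y → 0 ≤ (f x - f y) * (g x - g y)) :
    0 ≤ ∑ i, ∑ j, (f (a i) * g (a i) - f (a i) * g (a j)) * m i j := by
  set S := ∑ i, ∑ j, (f (a i) * g (a i) - f (a i) * g (a j)) * m i j with hS
  have hswap : S = ∑ i, ∑ j, (f (a j) * g (a j) - f (a j) * g (a i)) * m i j := by
    rw [hS, Finset.sum_comm]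
    exact Finset.sum_congr rfl fun i _ => Finset.sum_congr rfl fun j _ => by rw [hsym]
  have h2 : 2 * S = ∑ i, ∑ j, ((f (a i) - f (a j)) * (g (a i) - g (a j))) * m i j := by
    calc 2 * S = S + S := two_mul S
    _ = ∑ i, ∑ j, ((f (a i) * g (a i) - f (a i) * g (a j)) * m i j
          + (f (a j) * g (a j) - f (a j) * g (a i)) * m i j) := by
        nth_rewrite 2 [hswap]; nth_rewrite 1 [hS]
        rw [← Finset.sum_add_distrib]
        exact Finset.sum_congr rfl fun i _ => (Finset.sum_add_distrib).symm
    _ = _ := Finset.sum_congr rfl fun i _ => Finset.sum_congr rfl fun j _ => by ring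
  nlinarith [Finset.sum_nonneg (fun i (_ : i ∈ Finset.univ) => Finset.sum_nonneg
    (fun j (_ : j ∈ Finset.univ) => mul_nonneg (hfg (a i) (a j) (ha i) (ha j)) (hm i j)))]

/-- For a monotonic pair (f,g) of nonnegative functions, Corr_{ρ,(f,g)}(A,A) ≥ 0
for every Hermitian A. -/
theorem corrFG_self_nonneg {n : ℕ} (ρ A : Matrix (Fin n) (Fin n) ℂ)
    (hρ : ρ.PosSemidef) (hρ1 : ρ.trace = 1)
    (f g : ℝ → ℝ) (hf : ∀ x : ℝ, 0 ≤ x → 0 ≤ f x) (hg : ∀ x : ℝ, 0 ≤ x → 0 ≤ g x)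
    (hfg : ∀ a b : ℝ, 0 ≤ a → 0 ≤ b → 0 ≤ (f a - f b) * (g a - g b))
    (hA : A.IsHermitian) :
    0 ≤ (corrFG f g ρ A A).re := by
  classical
  have hH : ρ.IsHermitian := hρ.1
  set U : Matrix (Fin n) (Fin n) ℂ := (hH.eigenvectorUnitary : Matrix (Fin n) (Fin n) ℂ) with hUdef
  have hU1 : U * star U = 1 := Unitary.coe_mul_star_self _
  have hU2 : star U * U = 1 := Unitary.coe_star_mul_self _
  have hRe : ∀ X : Matrix (Fin n) (Fin n) ℂ, star U * (U * X) = X := fun X => by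
    rw [← mul_assoc, hU2, one_mul]
  set E : Fin n → ℝ := hH.eigenvalues with hE
  set C : Matrix (Fin n) (Fin n) ℂ := star U * A * U with hCdef
  have hCH : star C = C := by
    rw [hCdef]
    simp only [Matrix.star_mul, star_star, mul_assoc, show star A = A from hA]
  have hCent : ∀ i j, C j i = star (C i j) := by
    intro i j
    conv_lhs => rw [← hCH]
    simp [Matrix.star_eq_conjTranspose, Matrix.conjTranspose_apply]
  have hA' : A = U * C * star U := by
    rw [hCdef]
    simp only [← mul_assoc, hU1, one_mul]
    rw [mul_assoc, hU1, mul_one]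
  set Df : Matrix (Fin n) (Fin n) ℂ := diagonal (fun i => (f (E i) : ℂ)) with hDf
  set Dg : Matrix (Fin n) (Fin n) ℂ := diagonal (fun i => (g (E i) : ℂ)) with hDg
  have hf' : cfc f ρ = U * Df * star U := by
    rw [hH.cfc_eq]; rfl
  have hg' : cfc g ρ = U * Dg * star U := by
    rw [hH.cfc_eq]; rfl
  have key : ∀ M : Matrix (Fin n) (Fin n) ℂ, (U * M * star U).trace = M.trace := fun M => by
    rw [trace_mul_cycle, hU2, one_mul]
  have t1 : (cfc f ρ * cfc g ρ * Aᴴ * A).trace = (Df * Dg * C * C).trace := by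
    rw [← key (Df * Dg * C * C), hA.eq, hA', hf', hg']
    congr 1
    simp only [mul_assoc, hRe]
  have t2 : (cfc f ρ * Aᴴ * cfc g ρ * A).trace = (Df * C * Dg * C).trace := by
    rw [← key (Df * C * Dg * C), hA.eq, hA', hf', hg']
    congr 1
    simp only [mul_assoc, hRe]
  have e1 : (Df * Dg * C * C).trace
      = ∑ i, ∑ j, ((f (E i) * g (E i) : ℝ) : ℂ) * (C i j * C j i) := by
    rw [hDf, hDg, diagonal_mul_diagonal]
    simp only [Matrix.trace, Matrix.diag, Matrix.mul_apply, Matrix.diagonal_apply,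
      ite_mul, zero_mul, Finset.sum_ite_eq, Finset.mem_univ, if_pos]
    push_cast
    exact Finset.sum_congr rfl fun i _ => Finset.sum_congr rfl fun j _ => by ring
  have e2 : (Df * C * Dg * C).trace
      = ∑ i, ∑ j, ((f (E i) * g (E j) : ℝ) : ℂ) * (C i j * C j i) := by
    rw [hDf, hDg]
    simp only [Matrix.trace, Matrix.diag, Matrix.mul_apply, Matrix.diagonal_apply,
      ite_mul, zero_mul, mul_ite, mul_zero, Finset.sum_ite_eq, Finset.sum_ite_eq',
      Finset.mem_univ, if_pos]
    push_cast
    exact Finset.sum_congr rfl fun i _ => Finset.sum_congr rfl fun j _ => by ring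
  have hcc : ∀ i j, C i j * C j i = ((Complex.normSq (C i j) : ℝ) : ℂ) := by
    intro i j
    rw [hCent i j, ← Complex.mul_conj]
    rfl
  have main : corrFG f g ρ A A
      = ((∑ i, ∑ j, (f (E i) * g (E i) - f (E i) * g (E j)) * Complex.normSq (C i j) : ℝ) : ℂ) := by
    rw [corrFG, t1, t2, e1, e2]
    push_cast
    rw [← Finset.sum_sub_distrib]
    refine Finset.sum_congr rfl fun i _ => ?_
    rw [← Finset.sum_sub_distrib]
    refine Finset.sum_congr rfl fun j _ => ?_
    rw [hcc i j]
    push_cast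
    ring
  rw [main, Complex.ofReal_re]
  exact double_sum_nonneg' E (fun i j => Complex.normSq (C i j))
    (fun i j => Complex.normSq_nonneg _)
    (fun i j => by
      show Complex.normSq (C i j) = Complex.normSq (C j i)
      rw [hCent i j]; simp [Complex.normSq_conj])
    f g (fun i => hρ.eigenvalues_nonneg i) hfg
end

section
/- For α ∈ [0,1], a density matrix ρ and Hermitian matrices A, B, the one-parameter extended Wigner–Yanase skew informations satisfy K_{ρ,α}(A) K_{ρ,α}(B) ≥ |Re{Corr^{(K)}_{ρ,α}(A,B)}|², where Corr^{(K)}_{ρ,α}(X,Y) = Tr[((ρ^α+ρ^{1-α})/2)² X*Y] - Tr[((ρ^α+ρ^{1-α})/2) X* ((ρ^α+ρ^{1-α})/2) Y] and K_{ρ,α}(H) = Corr^{(K)}_{ρ,α}(H,H). -/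
open Matrix
open scoped ComplexOrder

/-- One-parameter extended correlation measure Corr^{(K)}_{ρ,α}(X,Y). -/
noncomputable def corrK {n : ℕ} (ρ : Matrix (Fin n) (Fin n) ℂ) (α : ℝ)
    (X Y : Matrix (Fin n) (Fin n) ℂ) : ℂ :=
  let M : Matrix (Fin n) (Fin n) ℂ := (2:ℂ)⁻¹ • (mpow ρ α + mpow ρ (1 - α))
  (M * M * Xᴴ * Y).trace - (M * Xᴴ * M * Y).trace

-- Cauchy–Schwarz for the Frobenius inner product
lemma trace_cs {n : ℕ} (C D : Matrix (Fin n) (Fin n) ℂ) :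
    ((Cᴴ * D).trace.re) ^ 2 ≤ ((Cᴴ * C).trace.re) * ((Dᴴ * D).trace.re) := by
  let u : EuclideanSpace ℂ (Fin n × Fin n) := WithLp.toLp 2 (fun p : Fin n × Fin n => C p.1 p.2)
  let v : EuclideanSpace ℂ (Fin n × Fin n) := WithLp.toLp 2 (fun p : Fin n × Fin n => D p.1 p.2)
  have key : ∀ (X Y : Matrix (Fin n) (Fin n) ℂ),
      (Xᴴ * Y).trace = ∑ p : Fin n × Fin n, (starRingEnd ℂ) (X p.1 p.2) * Y p.1 p.2 := by
    intro X Y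
    simp only [Matrix.trace, Matrix.diag, Matrix.mul_apply, Matrix.conjTranspose_apply,
      Fintype.sum_prod_type]
    rw [Finset.sum_comm]; rfl
  have hinner : ∀ (X Y : Matrix (Fin n) (Fin n) ℂ)
      (x y : EuclideanSpace ℂ (Fin n × Fin n)),
      (∀ p, x p = X p.1 p.2) → (∀ p, y p = Y p.1 p.2) →
      (inner ℂ x y : ℂ) = (Xᴴ * Y).trace := by
    intro X Y x y hx hy
    rw [key]
    simp [PiLp.inner_apply, RCLike.inner_apply, hx, hy, mul_comm]
  have huv : (inner ℂ u v : ℂ) = (Cᴴ * D).trace := hinner C D u v (fun _ => rfl) (fun _ => rfl)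
  have huu : (inner ℂ u u : ℂ) = (Cᴴ * C).trace := hinner C C u u (fun _ => rfl) (fun _ => rfl)
  have hvv : (inner ℂ v v : ℂ) = (Dᴴ * D).trace := hinner D D v v (fun _ => rfl) (fun _ => rfl)
  have h1 : |(Cᴴ * D).trace.re| ≤ ‖u‖ * ‖v‖ := by
    rw [← huv]
    exact (Complex.abs_re_le_norm _).trans (norm_inner_le_norm u v)
  calc ((Cᴴ * D).trace.re) ^ 2 = |(Cᴴ * D).trace.re| ^ 2 := (sq_abs _).symm
    _ ≤ (‖u‖ * ‖v‖) ^ 2 := by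
        exact pow_le_pow_left₀ (abs_nonneg _) h1 2
    _ = ‖u‖ ^ 2 * ‖v‖ ^ 2 := by ring
    _ = ((Cᴴ * C).trace.re) * ((Dᴴ * D).trace.re) := by
        rw [← huu, ← hvv]; rw [← RCLike.re_to_complex, ← RCLike.re_to_complex, inner_self_eq_norm_sq u, inner_self_eq_norm_sq v]


lemma corr_re {n : ℕ} (M X Y : Matrix (Fin n) (Fin n) ℂ) (hM : Mᴴ = M) (hX : Xᴴ = X)
    (hY : Yᴴ = Y) :
    ((M * M * Xᴴ * Y).trace - (M * Xᴴ * M * Y).trace).re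
      = (1/2 : ℝ) * (((M * X - X * M)ᴴ * (M * Y - Y * M)).trace).re := by
  rw [hX]
  have h1 : (M * X - X * M)ᴴ = X * M - M * X := by
    rw [Matrix.conjTranspose_sub, Matrix.conjTranspose_mul, Matrix.conjTranspose_mul, hM, hX]
  rw [h1]
  have expand : (X * M - M * X) * (M * Y - Y * M)
      = X * M * M * Y - X * M * Y * M - M * X * M * Y + M * X * Y * M := by
    rw [Matrix.sub_mul, Matrix.mul_sub, Matrix.mul_sub]
    simp only [Matrix.mul_assoc]
    abel
  rw [expand]
  set a := (M * M * X * Y).trace with ha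
  set b := (M * X * M * Y).trace with hb
  have h2 : (X * M * M * Y).trace = star a := by
    rw [ha, ← Matrix.trace_conjTranspose]
    have : (M * M * X * Y)ᴴ = Y * X * (M * M) := by
      simp [Matrix.conjTranspose_mul, hM, hX, hY, Matrix.mul_assoc]
    rw [this]
    rw [Matrix.trace_mul_comm (Y * X) (M * M)]
    rw [show M * M * (Y * X) = M * M * Y * X by simp [Matrix.mul_assoc],
        Matrix.trace_mul_comm (M * M * Y) X]
    rw [show X * (M * M * Y) = X * M * M * Y by simp [Matrix.mul_assoc]]
  have h3 : (X * M * Y * M).trace = b := by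
    rw [hb, Matrix.trace_mul_comm (X * M * Y) M]
    simp [Matrix.mul_assoc]
  have h4 : (M * X * Y * M).trace = a := by
    rw [ha, Matrix.trace_mul_comm (M * X * Y) M]
    simp [Matrix.mul_assoc]
  rw [Matrix.trace_add, Matrix.trace_sub, Matrix.trace_sub, h2, h3, h4]
  have : (M * M * Xᴴ * Y).trace = a := by rw [hX, ha]
  rw [hX] at *
  simp only [Complex.sub_re, Complex.add_re, Complex.star_def, Complex.conj_re]
  ring

/-- K_{ρ,α}(A) K_{ρ,α}(B) ≥ |Re Corr^{(K)}_{ρ,α}(A,B)|². -/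
theorem extended_wy_skew_information_inequality {n : ℕ} (ρ A B : Matrix (Fin n) (Fin n) ℂ)
    (hρ : ρ.PosSemidef) (hρ1 : ρ.trace = 1) (α : ℝ) (hα : α ∈ Set.Icc (0:ℝ) 1)
    (hA : A.IsHermitian) (hB : B.IsHermitian) :
    (corrK ρ α A A).re * (corrK ρ α B B).re ≥ |(corrK ρ α A B).re| ^ 2 := by
  set M : Matrix (Fin n) (Fin n) ℂ := (2:ℂ)⁻¹ • (mpow ρ α + mpow ρ (1 - α)) with hMdef
  have hsa1 : IsSelfAdjoint (mpow ρ α) := cfc_predicate _ ρ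
  have hsa2 : IsSelfAdjoint (mpow ρ (1 - α)) := cfc_predicate _ ρ
  replace hsa1 : (mpow ρ α)ᴴ = mpow ρ α := by rw [← Matrix.star_eq_conjTranspose]; exact hsa1
  replace hsa2 : (mpow ρ (1 - α))ᴴ = mpow ρ (1 - α) := by rw [← Matrix.star_eq_conjTranspose]; exact hsa2
  have hM : Mᴴ = M := by
    rw [hMdef, Matrix.conjTranspose_smul, Matrix.conjTranspose_add, hsa1, hsa2]
    norm_num
  have hcorr : ∀ X Y : Matrix (Fin n) (Fin n) ℂ, Xᴴ = X → Yᴴ = Y → (corrK ρ α X Y).re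
      = (1/2 : ℝ) * (((M * X - X * M)ᴴ * (M * Y - Y * M)).trace).re := by
    intro X Y hX hY
    have h0 : corrK ρ α X Y = (M * M * Xᴴ * Y).trace - (M * Xᴴ * M * Y).trace := rfl
    rw [h0]
    exact corr_re M X Y hM hX hY
  rw [ge_iff_le, hcorr A B hA hB, hcorr A A hA hA, hcorr B B hB hB, sq_abs]
  nlinarith [trace_cs (M * A - A * M) (M * B - B * M),
    sq_nonneg ((((M * A - A * M)ᴴ * (M * B - B * M)).trace).re)]
end

section
/- For α ∈ [0,1], a density matrix ρ, and Hermitian matrices A, B, the Wigner–Yanase–Dyson skew informations satisfy I_{ρ,α}(A) I_{ρ,α}(B) ≥ |Re{Corr_{ρ,α}(A,B)}|², where I_{ρ,α}(H) = Tr[ρH²] - Tr[ρ^α H ρ^{1-α} H] and Corr_{ρ,α}(X,Y) = Tr[ρ X*Y] - Tr[ρ^α X* ρ^{1-α} Y]. -/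
open Matrix
open scoped ComplexOrder

/-- One-parameter extended correlation measure Corr_{ρ,α}(X,Y). -/
noncomputable def corrAlpha {n : ℕ} (ρ : Matrix (Fin n) (Fin n) ℂ) (α : ℝ)
    (X Y : Matrix (Fin n) (Fin n) ℂ) : ℂ :=
  (ρ * Xᴴ * Y).trace - (mpow ρ α * Xᴴ * mpow ρ (1 - α) * Y).trace

/-- Wigner–Yanase–Dyson skew information I_{ρ,α}(H) = Tr[ρH²] - Tr[ρ^α H ρ^{1-α} H]. -/
noncomputable def wydSkew {n : ℕ} (ρ : Matrix (Fin n) (Fin n) ℂ) (α : ℝ)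
    (H : Matrix (Fin n) (Fin n) ℂ) : ℝ :=
  ((ρ * (H * H)).trace).re - ((mpow ρ α * H * mpow ρ (1 - α) * H).trace).re

private lemma amgm2 {a b α : ℝ} (ha : 0 ≤ a) (hb : 0 ≤ b) (h0 : 0 ≤ α) (h1 : α ≤ 1) :
    a ^ α * b ^ (1 - α) + b ^ α * a ^ (1 - α) ≤ a + b := by
  have g1 := Real.geom_mean_le_arith_mean2_weighted h0 (by linarith : (0:ℝ) ≤ 1 - α) ha hb
    (show α + (1 - α) = 1 by ring)
  have g2 := Real.geom_mean_le_arith_mean2_weighted h0 (by linarith : (0:ℝ) ≤ 1 - α) hb ha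
    (show α + (1 - α) = 1 by ring)
  linarith

private lemma trace_ddzz {n : ℕ} (d e : Fin n → ℂ) (Y Z : Matrix (Fin n) (Fin n) ℂ) :
    (Matrix.diagonal d * Y * Matrix.diagonal e * Z).trace
      = ∑ i, ∑ j, d i * e j * (Y i j * Z j i) := by
  have h1 : ∀ i j, (Matrix.diagonal d * Y * Matrix.diagonal e) i j = d i * Y i j * e j := by
    intro i j
    rw [Matrix.mul_diagonal, Matrix.diagonal_mul]
  have h2 : (Matrix.diagonal d * Y * Matrix.diagonal e * Z).trace
      = ∑ i, ∑ j, (Matrix.diagonal d * Y * Matrix.diagonal e) i j * Z j i := by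
    rw [Matrix.trace]
    exact Finset.sum_congr rfl fun i _ => by rw [Matrix.diag_apply, Matrix.mul_apply]
  rw [h2]
  exact Finset.sum_congr rfl fun i _ => Finset.sum_congr rfl fun j _ => by rw [h1]; ring

private lemma conj4 {n : ℕ} (U A B D1 D2 : Matrix (Fin n) (Fin n) ℂ)
    (h1 : U * star U = 1) :
    (U * D1 * star U) * A * (U * D2 * star U) * B
      = U * (D1 * (star U * A * U) * D2 * (star U * B * U)) * star U := by
  simp only [Matrix.mul_assoc, h1, Matrix.mul_one]

private lemma trace_conj {n : ℕ} (U M : Matrix (Fin n) (Fin n) ℂ) (h2 : star U * U = 1) :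
    (U * M * star U).trace = M.trace := by
  rw [Matrix.trace_mul_cycle, h2, Matrix.one_mul]

private lemma sym_sum {n : ℕ} (s f : Fin n → Fin n → ℝ) (hf : ∀ i j, f i j = f j i) :
    ∑ i, ∑ j, s i j * f i j = ∑ i, ∑ j, ((s i j + s j i) / 2) * f i j := by
  have h2 : ∑ i, ∑ j, s j i * f i j = ∑ i, ∑ j, s i j * f i j := by
    rw [Finset.sum_comm]
    exact Finset.sum_congr rfl fun i _ => Finset.sum_congr rfl fun j _ => by rw [hf]
  have h3 : (∑ i, ∑ j, ((s i j + s j i) / 2) * f i j) * 2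
      = (∑ i, ∑ j, s i j * f i j) + (∑ i, ∑ j, s j i * f i j) := by
    rw [Finset.sum_mul, ← Finset.sum_add_distrib]
    refine Finset.sum_congr rfl fun i _ => ?_
    rw [Finset.sum_mul, ← Finset.sum_add_distrib]
    refine Finset.sum_congr rfl fun j _ => ?_
    ring
  linarith

/-- I_{ρ,α}(A) I_{ρ,α}(B) ≥ |Re Corr_{ρ,α}(A,B)|². -/
theorem wyd_skew_information_inequality {n : ℕ} (ρ A B : Matrix (Fin n) (Fin n) ℂ)
    (hρ : ρ.PosSemidef) (hρ1 : ρ.trace = 1) (α : ℝ) (hα : α ∈ Set.Icc (0:ℝ) 1)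
    (hA : A.IsHermitian) (hB : B.IsHermitian) :
    wydSkew ρ α A * wydSkew ρ α B ≥ |(corrAlpha ρ α A B).re| ^ 2 := by
  obtain ⟨hα0, hα1⟩ := hα
  have hH : ρ.IsHermitian := hρ.1
  set U : Matrix (Fin n) (Fin n) ℂ := (hH.eigenvectorUnitary : Matrix (Fin n) (Fin n) ℂ) with hUdef
  set lam : Fin n → ℝ := hH.eigenvalues with hlamdef
  have hU1 : U * star U = 1 := Unitary.mul_star_self_of_mem hH.eigenvectorUnitary.2
  have hU2 : star U * U = 1 := Unitary.star_mul_self_of_mem hH.eigenvectorUnitary.2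
  have hlam : ∀ i, 0 ≤ lam i := hρ.eigenvalues_nonneg
  have hmp : ∀ p : ℝ, mpow ρ p = U * Matrix.diagonal (fun i => ((lam i ^ p : ℝ) : ℂ)) * star U := by
    intro p
    rw [mpow, hH.cfc_eq, Matrix.IsHermitian.cfc]
    rfl
  have hρeq : ρ = U * Matrix.diagonal (fun i => ((lam i : ℝ) : ℂ)) * star U := hH.spectral_theorem
  set Y : Matrix (Fin n) (Fin n) ℂ := star U * A * U with hYdef
  set Z : Matrix (Fin n) (Fin n) ℂ := star U * B * U with hZdef
  have hYsym : ∀ i j, Y j i = (starRingEnd ℂ) (Y i j) := by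
    intro i j
    have hYh : Y.IsHermitian := by
      unfold Matrix.IsHermitian
      rw [hYdef]
      simp only [Matrix.star_eq_conjTranspose, Matrix.conjTranspose_mul,
        Matrix.conjTranspose_conjTranspose, hA.eq, Matrix.mul_assoc]
    calc Y j i = (Yᴴ) j i := by rw [hYh]
      _ = (starRingEnd ℂ) (Y i j) := Matrix.conjTranspose_apply _ _ _
  have hZsym : ∀ i j, Z j i = (starRingEnd ℂ) (Z i j) := by
    intro i j
    have hZh : Z.IsHermitian := by
      unfold Matrix.IsHermitian
      rw [hZdef]
      simp only [Matrix.star_eq_conjTranspose, Matrix.conjTranspose_mul,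
        Matrix.conjTranspose_conjTranspose, hB.eq, Matrix.mul_assoc]
    calc Z j i = (Zᴴ) j i := by rw [hZh]
      _ = (starRingEnd ℂ) (Z i j) := Matrix.conjTranspose_apply _ _ _
  -- key trace identities
  have key : ∀ (p q : ℝ) (M N : Matrix (Fin n) (Fin n) ℂ),
      (mpow ρ p * M * mpow ρ q * N).trace
        = ∑ i, ∑ j, ((lam i ^ p : ℝ) : ℂ) * ((lam j ^ q : ℝ) : ℂ)
            * ((star U * M * U) i j * (star U * N * U) j i) := by
    intro p q M N
    rw [hmp p, hmp q, conj4 U M N _ _ hU1, trace_conj _ _ hU2, trace_ddzz]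
  have keyρ : ∀ (M N : Matrix (Fin n) (Fin n) ℂ),
      (ρ * M * N).trace
        = ∑ i, ∑ j, ((lam i : ℝ) : ℂ)
            * ((star U * M * U) i j * (star U * N * U) j i) := by
    intro M N
    have e1 : ρ * M * N
        = (U * Matrix.diagonal (fun i => ((lam i : ℝ) : ℂ)) * star U) * M
          * (U * Matrix.diagonal (fun _ : Fin n => (1:ℂ)) * star U) * N := by
      rw [← hρeq]
      have hd1 : Matrix.diagonal (fun _ : Fin n => (1:ℂ)) = (1 : Matrix (Fin n) (Fin n) ℂ) :=
        Matrix.diagonal_one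
      rw [hd1, Matrix.mul_one, hU1, Matrix.mul_one]
    rw [e1, conj4 U M N _ _ hU1, trace_conj _ _ hU2, trace_ddzz]
    simp
  set s : Fin n → Fin n → ℝ := fun i j => lam i - lam i ^ α * lam j ^ (1 - α) with hsdef
  -- the three quantities as real double sums
  have hwA : wydSkew ρ α A = ∑ i, ∑ j, s i j * Complex.normSq (Y i j) := by
    have e1 : ((ρ * (A * A)).trace).re = ∑ i, ∑ j, lam i * Complex.normSq (Y i j) := by
      rw [← Matrix.mul_assoc, keyρ A A, ← hYdef, Complex.re_sum]
      refine Finset.sum_congr rfl fun i _ => ?_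
      rw [Complex.re_sum]
      refine Finset.sum_congr rfl fun j _ => ?_
      rw [hYsym i j, Complex.mul_conj]
      simp [← Complex.ofReal_mul]
    have e2 : ((mpow ρ α * A * mpow ρ (1 - α) * A).trace).re
        = ∑ i, ∑ j, (lam i ^ α * lam j ^ (1 - α)) * Complex.normSq (Y i j) := by
      rw [key α (1 - α) A A, ← hYdef, Complex.re_sum]
      refine Finset.sum_congr rfl fun i _ => ?_
      rw [Complex.re_sum]
      refine Finset.sum_congr rfl fun j _ => ?_
      rw [hYsym i j, Complex.mul_conj]
      simp [← Complex.ofReal_mul]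
    rw [wydSkew, e1, e2, ← Finset.sum_sub_distrib]
    refine Finset.sum_congr rfl fun i _ => ?_
    rw [← Finset.sum_sub_distrib]
    refine Finset.sum_congr rfl fun j _ => ?_
    rw [hsdef]; ring
  have hwB : wydSkew ρ α B = ∑ i, ∑ j, s i j * Complex.normSq (Z i j) := by
    have e1 : ((ρ * (B * B)).trace).re = ∑ i, ∑ j, lam i * Complex.normSq (Z i j) := by
      rw [← Matrix.mul_assoc, keyρ B B, ← hZdef, Complex.re_sum]
      refine Finset.sum_congr rfl fun i _ => ?_
      rw [Complex.re_sum]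
      refine Finset.sum_congr rfl fun j _ => ?_
      rw [hZsym i j, Complex.mul_conj]
      simp [← Complex.ofReal_mul]
    have e2 : ((mpow ρ α * B * mpow ρ (1 - α) * B).trace).re
        = ∑ i, ∑ j, (lam i ^ α * lam j ^ (1 - α)) * Complex.normSq (Z i j) := by
      rw [key α (1 - α) B B, ← hZdef, Complex.re_sum]
      refine Finset.sum_congr rfl fun i _ => ?_
      rw [Complex.re_sum]
      refine Finset.sum_congr rfl fun j _ => ?_
      rw [hZsym i j, Complex.mul_conj]
      simp [← Complex.ofReal_mul]
    rw [wydSkew, e1, e2, ← Finset.sum_sub_distrib]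
    refine Finset.sum_congr rfl fun i _ => ?_
    rw [← Finset.sum_sub_distrib]
    refine Finset.sum_congr rfl fun j _ => ?_
    rw [hsdef]; ring
  have hcorr : (corrAlpha ρ α A B).re
      = ∑ i, ∑ j, s i j * (Y i j * (starRingEnd ℂ) (Z i j)).re := by
    have e1 : ((ρ * Aᴴ * B).trace).re
        = ∑ i, ∑ j, lam i * (Y i j * (starRingEnd ℂ) (Z i j)).re := by
      rw [hA.eq, keyρ A B, ← hYdef, ← hZdef, Complex.re_sum]
      refine Finset.sum_congr rfl fun i _ => ?_
      rw [Complex.re_sum]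
      refine Finset.sum_congr rfl fun j _ => ?_
      rw [hZsym i j, Complex.re_ofReal_mul]
    have e2 : ((mpow ρ α * Aᴴ * mpow ρ (1 - α) * B).trace).re
        = ∑ i, ∑ j, (lam i ^ α * lam j ^ (1 - α)) * (Y i j * (starRingEnd ℂ) (Z i j)).re := by
      rw [hA.eq, key α (1 - α) A B, ← hYdef, ← hZdef, Complex.re_sum]
      refine Finset.sum_congr rfl fun i _ => ?_
      rw [Complex.re_sum]
      refine Finset.sum_congr rfl fun j _ => ?_
      rw [hZsym i j]
      simp [← Complex.ofReal_mul, Complex.re_ofReal_mul]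
    rw [corrAlpha, Complex.sub_re, e1, e2, ← Finset.sum_sub_distrib]
    refine Finset.sum_congr rfl fun i _ => ?_
    rw [← Finset.sum_sub_distrib]
    refine Finset.sum_congr rfl fun j _ => ?_
    rw [hsdef]; ring
  -- symmetrized weights
  set w : Fin n → Fin n → ℝ := fun i j => (s i j + s j i) / 2 with hwdef
  have hw0 : ∀ i j, 0 ≤ w i j := by
    intro i j
    have := amgm2 (hlam i) (hlam j) hα0 hα1
    rw [hwdef, hsdef]
    dsimp only
    linarith
  have hwA' : wydSkew ρ α A = ∑ i, ∑ j, w i j * Complex.normSq (Y i j) := by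
    rw [hwA]
    exact sym_sum s _ fun i j => by rw [hYsym i j, Complex.normSq_conj]
  have hwB' : wydSkew ρ α B = ∑ i, ∑ j, w i j * Complex.normSq (Z i j) := by
    rw [hwB]
    exact sym_sum s _ fun i j => by rw [hZsym i j, Complex.normSq_conj]
  have hcorr' : (corrAlpha ρ α A B).re
      = ∑ i, ∑ j, w i j * (Y i j * (starRingEnd ℂ) (Z i j)).re := by
    rw [hcorr]
    refine sym_sum s _ fun i j => ?_
    rw [hYsym i j, hZsym i j, Complex.conj_conj]
    rw [show (starRingEnd ℂ) (Y i j) * Z i j = (starRingEnd ℂ) (Y i j * (starRingEnd ℂ) (Z i j))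
      from by rw [_root_.map_mul, Complex.conj_conj]]
    rw [Complex.conj_re]
  -- Cauchy–Schwarz endgame
  set F : Fin n × Fin n → ℝ := fun p => Real.sqrt (w p.1 p.2) * ‖Y p.1 p.2‖ with hFdef
  set G : Fin n × Fin n → ℝ := fun p => Real.sqrt (w p.1 p.2) * ‖Z p.1 p.2‖ with hGdef
  have hFG : |(corrAlpha ρ α A B).re| ≤ ∑ p : Fin n × Fin n, F p * G p := by
    rw [hcorr', Fintype.sum_prod_type]
    refine (Finset.abs_sum_le_sum_abs _ _).trans ?_
    refine (Finset.sum_le_sum fun i _ => Finset.abs_sum_le_sum_abs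
      (fun j => w i j * (Y i j * (starRingEnd ℂ) (Z i j)).re) Finset.univ).trans ?_
    refine Finset.sum_le_sum fun i _ => Finset.sum_le_sum fun j _ => ?_
    have hfg : F (i, j) * G (i, j)
        = w i j * (‖Y i j‖ * ‖Z i j‖) := by
      rw [hFdef, hGdef]
      dsimp only
      rw [mul_mul_mul_comm, Real.mul_self_sqrt (hw0 i j)]
    rw [hfg, abs_mul, abs_of_nonneg (hw0 i j)]
    refine mul_le_mul_of_nonneg_left ?_ (hw0 i j)
    calc |(Y i j * (starRingEnd ℂ) (Z i j)).re|
        ≤ ‖Y i j * (starRingEnd ℂ) (Z i j)‖ := Complex.abs_re_le_norm _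
      _ = ‖Y i j‖ * ‖Z i j‖ := by rw [norm_mul, Complex.norm_conj]
  have hF2 : ∑ p : Fin n × Fin n, F p ^ 2 = ∑ i, ∑ j, w i j * Complex.normSq (Y i j) := by
    rw [Fintype.sum_prod_type]
    refine Finset.sum_congr rfl fun i _ => Finset.sum_congr rfl fun j _ => ?_
    rw [hFdef]
    dsimp only
    rw [mul_pow, Real.sq_sqrt (hw0 i j), Complex.sq_norm]
  have hG2 : ∑ p : Fin n × Fin n, G p ^ 2 = ∑ i, ∑ j, w i j * Complex.normSq (Z i j) := by
    rw [Fintype.sum_prod_type]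
    refine Finset.sum_congr rfl fun i _ => Finset.sum_congr rfl fun j _ => ?_
    rw [hGdef]
    dsimp only
    rw [mul_pow, Real.sq_sqrt (hw0 i j), Complex.sq_norm]
  rw [ge_iff_le, hwA', hwB', ← hF2, ← hG2]
  calc |(corrAlpha ρ α A B).re| ^ 2
      ≤ (∑ p : Fin n × Fin n, F p * G p) ^ 2 := by
        exact pow_le_pow_left₀ (abs_nonneg _) hFG 2
    _ ≤ (∑ p : Fin n × Fin n, F p ^ 2) * ∑ p : Fin n × Fin n, G p ^ 2 :=
        Finset.sum_mul_sq_le_sq_mul_sq _ _ _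
end

section
/- For a positive definite matrix X with Tr[X] = d and positive semidefinite B, ν ∈ (0,1), D_ν(X | exp_ν(B)) equals the supremum over positive semidefinite A of Tr[X^{1-ν}A] - d·ln_ν(Tr[exp_ν(A+B)]/d). -/
open Matrix
open scoped ComplexOrder

section Helpers

variable {n : ℕ}

private lemma finContOn {s : Set ℝ} (hs : s.Finite) (f : ℝ → ℝ) : ContinuousOn f s := by
  have : Finite s := hs.to_subtype
  have : DiscreteTopology s := Finite.instDiscreteTopology
  rw [continuousOn_iff_continuous_restrict]
  exact continuous_of_discreteTopology

private lemma contOnSpec (M : Matrix (Fin n) (Fin n) ℂ) (f : ℝ → ℝ) :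
    ContinuousOn f (spectrum ℝ M) := finContOn (Matrix.finite_real_spectrum (A := M)) f

private lemma contOnImg (M : Matrix (Fin n) (Fin n) ℂ) (f g : ℝ → ℝ) :
    ContinuousOn g (f '' spectrum ℝ M) :=
  finContOn ((Matrix.finite_real_spectrum (A := M)).image f) g

private lemma trace_hcfc {A : Matrix (Fin n) (Fin n) ℂ} (hA : A.IsHermitian) (f : ℝ → ℝ) :
    (Matrix.IsHermitian.cfc hA f).trace = ∑ i, (f (hA.eigenvalues i) : ℂ) := by
  unfold Matrix.IsHermitian.cfc
  simp only [Unitary.conjStarAlgAut_apply]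
  rw [Matrix.trace_mul_cycle, Unitary.star_mul_self_of_mem (SetLike.coe_mem _), one_mul,
    trace_diagonal]
  simp

private lemma trace_eq_sum_eigen {A : Matrix (Fin n) (Fin n) ℂ} (hA : A.IsHermitian) :
    A.trace = ∑ i, (hA.eigenvalues i : ℂ) := by
  have h1 : A = Matrix.IsHermitian.cfc hA id := by
    rw [← Matrix.IsHermitian.cfc_eq]
    exact (cfc_id ℝ A hA).symm
  conv_lhs => rw [h1]
  exact trace_hcfc hA id

private lemma hcfc_sub {A : Matrix (Fin n) (Fin n) ℂ} (hA : A.IsHermitian) (f g : ℝ → ℝ) :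
    Matrix.IsHermitian.cfc hA f - Matrix.IsHermitian.cfc hA g
      = Matrix.IsHermitian.cfc hA (fun x => f x - g x) := by
  unfold Matrix.IsHermitian.cfc
  simp only [Unitary.conjStarAlgAut_apply]
  rw [← sub_mul, ← mul_sub, diagonal_sub]
  congr 1
  ext i
  simp

private lemma conj_mul_conj {U D E : Matrix (Fin n) (Fin n) ℂ} (hU : star U * U = 1) :
    (U * D * star U) * (U * E * star U) = U * (D * E) * star U := by
  have h : (U * D * star U) * (U * E * star U)
      = U * (D * ((star U * U) * (E * star U))) := by simp only [Matrix.mul_assoc]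
  rw [h, hU, Matrix.one_mul]
  simp only [Matrix.mul_assoc]

private lemma hcfc_mul {A : Matrix (Fin n) (Fin n) ℂ} (hA : A.IsHermitian) (f g : ℝ → ℝ) :
    Matrix.IsHermitian.cfc hA f * Matrix.IsHermitian.cfc hA g
      = Matrix.IsHermitian.cfc hA (fun x => f x * g x) := by
  unfold Matrix.IsHermitian.cfc
  simp only [Unitary.conjStarAlgAut_apply]
  rw [conj_mul_conj (Unitary.star_mul_self_of_mem (SetLike.coe_mem _)), diagonal_mul_diagonal]
  congr 2
  ext i j
  by_cases h : i = j
  · subst h; simp [Matrix.diagonal]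
  · simp [Matrix.diagonal, h]

private lemma hcfc_posSemidef {A : Matrix (Fin n) (Fin n) ℂ} (hA : A.IsHermitian) {f : ℝ → ℝ}
    (hf : ∀ i, 0 ≤ f (hA.eigenvalues i)) : (Matrix.IsHermitian.cfc hA f).PosSemidef := by
  unfold Matrix.IsHermitian.cfc
  simp only [Unitary.conjStarAlgAut_apply]
  rw [star_eq_conjTranspose]
  exact PosSemidef.mul_mul_conjTranspose_same
    (Matrix.posSemidef_diagonal_iff.2 fun i => by
      simpa using Complex.zero_le_real.mpr (hf i)) _

private lemma psd_trace_re_nonneg {M : Matrix (Fin n) (Fin n) ℂ} (hM : M.PosSemidef) :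
    0 ≤ (M.trace).re := by
  rw [trace_eq_sum_eigen hM.1, Complex.re_sum]
  simp only [Complex.ofReal_re]
  exact Finset.sum_nonneg fun i _ => hM.eigenvalues_nonneg i

private lemma smul_one_sub_psd {M : Matrix (Fin n) (Fin n) ℂ} (hM : M.PosSemidef) :
    (((M.trace).re : ℝ) • (1 : Matrix (Fin n) (Fin n) ℂ) - M).PosSemidef := by
  set τ : ℝ := (M.trace).re with hτ
  have hτsum : τ = ∑ j, hM.1.eigenvalues j := by
    rw [hτ, trace_eq_sum_eigen hM.1, Complex.re_sum]; simp
  set V : Matrix (Fin n) (Fin n) ℂ := (hM.1.eigenvectorUnitary : Matrix (Fin n) (Fin n) ℂ) with hV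
  have hV1 : V * star V = 1 := (Matrix.mem_unitaryGroup_iff).mp (SetLike.coe_mem _)
  have key : τ • (1 : Matrix (Fin n) (Fin n) ℂ) - M
      = V * diagonal (fun j => ((τ - hM.1.eigenvalues j : ℝ) : ℂ)) * star V := by
    conv_lhs => rw [hM.1.spectral_theorem]
    simp only [Unitary.conjStarAlgAut_apply]
    have h1 : τ • (1 : Matrix (Fin n) (Fin n) ℂ) = V * (τ • 1) * star V := by
      rw [Matrix.mul_smul, Matrix.smul_mul, Matrix.mul_one, hV1]
    rw [h1, ← Matrix.sub_mul, ← Matrix.mul_sub]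
    congr 2
    ext i j
    by_cases h : i = j
    · subst h; simp [Matrix.one_apply, Matrix.diagonal, Complex.ofReal_sub]
    · simp [Matrix.one_apply, Matrix.diagonal, h]
  rw [key, star_eq_conjTranspose]
  refine PosSemidef.mul_mul_conjTranspose_same (Matrix.posSemidef_diagonal_iff.2 fun j => ?_) _
  refine Complex.zero_le_real.mpr (sub_nonneg.2 ?_)
  rw [hτsum]
  exact Finset.single_le_sum (fun k _ => hM.eigenvalues_nonneg k) (Finset.mem_univ j)

private lemma spec_nonneg_of_psd {M : Matrix (Fin n) (Fin n) ℂ} (hM : M.PosSemidef) :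
    ∀ x ∈ spectrum ℝ M, 0 ≤ x := by
  intro x hx
  rw [Matrix.IsHermitian.spectrum_real_eq_range_eigenvalues hM.1] at hx
  obtain ⟨i, rfl⟩ := hx
  exact hM.eigenvalues_nonneg i

private lemma spec_pos_of_pd {M : Matrix (Fin n) (Fin n) ℂ} (hM : M.PosDef) :
    ∀ x ∈ spectrum ℝ M, 0 < x := by
  intro x hx
  rw [Matrix.IsHermitian.spectrum_real_eq_range_eigenvalues hM.1] at hx
  obtain ⟨i, rfl⟩ := hx
  exact hM.eigenvalues_pos i

private lemma mpow_texp_psd {M : Matrix (Fin n) (Fin n) ℂ} (hM : M.PosSemidef) {ν : ℝ}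
    (hν : ν ∈ Set.Ioo (0:ℝ) 1) : mpow (texp ν M) ν = 1 + ν • M := by
  have hsa : IsSelfAdjoint M := hM.1
  rw [mpow, texp,
    ← cfc_comp (fun x : ℝ => x ^ ν) (fun x : ℝ => (1 + ν * x) ^ (1/ν)) M hsa
      (contOnImg M _ _) (contOnSpec M _)]
  have hcong : (spectrum ℝ M).EqOn
      ((fun x : ℝ => x ^ ν) ∘ (fun x : ℝ => (1 + ν * x) ^ (1/ν)))
      (fun x : ℝ => 1 + ν * x) := by
    intro x hx
    have hx0 : 0 ≤ x := spec_nonneg_of_psd hM x hx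
    have h1 : (0:ℝ) ≤ 1 + ν * x := by nlinarith [hν.1]
    simp only [Function.comp_apply]
    rw [← Real.rpow_mul h1, one_div_mul_cancel hν.1.ne', Real.rpow_one]
  rw [cfc_congr hcong]
  rw [show (fun x : ℝ => 1 + ν * x) = (fun x : ℝ => 1 + (fun y : ℝ => ν * y) x) from rfl,
    cfc_const_add 1 (fun y : ℝ => ν * y) M (contOnSpec M _) hsa,
    cfc_const_mul_id ν M hsa, Algebra.algebraMap_eq_smul_one, one_smul]

private lemma texp_psd {M : Matrix (Fin n) (Fin n) ℂ} (hM : M.PosSemidef) {ν : ℝ}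
    (hν : ν ∈ Set.Ioo (0:ℝ) 1) : (texp ν M).PosSemidef := by
  rw [texp, Matrix.IsHermitian.cfc_eq hM.1]
  refine hcfc_posSemidef hM.1 fun i => ?_
  have := hM.eigenvalues_nonneg i
  exact Real.rpow_nonneg (by nlinarith [hν.1]) _

private lemma trace_hcfc_mul_hcfc {A B : Matrix (Fin n) (Fin n) ℂ} (hA : A.IsHermitian)
    (hB : B.IsHermitian) (f g : ℝ → ℝ) :
    ((Matrix.IsHermitian.cfc hA f * Matrix.IsHermitian.cfc hB g).trace).re
      = ∑ i, ∑ j, f (hA.eigenvalues i) * g (hB.eigenvalues j) *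
          Complex.normSq ((star (hA.eigenvectorUnitary : Matrix (Fin n) (Fin n) ℂ)
            * (hB.eigenvectorUnitary : Matrix (Fin n) (Fin n) ℂ)) i j) := by
  set U : Matrix (Fin n) (Fin n) ℂ := (hA.eigenvectorUnitary : Matrix (Fin n) (Fin n) ℂ) with hU
  set V : Matrix (Fin n) (Fin n) ℂ := (hB.eigenvectorUnitary : Matrix (Fin n) (Fin n) ℂ) with hV
  set W : Matrix (Fin n) (Fin n) ℂ := star U * V with hW
  set D : Fin n → ℂ := fun i => (f (hA.eigenvalues i) : ℂ) with hD
  set E : Fin n → ℂ := fun j => (g (hB.eigenvalues j) : ℂ) with hE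
  have hsW : star W = star V * U := by rw [hW]; rw [StarMul.star_mul, star_star]
  have hDd : diagonal (RCLike.ofReal ∘ f ∘ hA.eigenvalues : Fin n → ℂ) = diagonal D := by
    congr 1
  have hEd : diagonal (RCLike.ofReal ∘ g ∘ hB.eigenvalues : Fin n → ℂ) = diagonal E := by
    congr 1
  have key : (Matrix.IsHermitian.cfc hA f * Matrix.IsHermitian.cfc hB g).trace
      = (diagonal D * W * diagonal E * star W).trace := by
    unfold Matrix.IsHermitian.cfc
    simp only [Unitary.conjStarAlgAut_apply]
    rw [hDd, hEd]
    rw [show (U * diagonal D * star U) * (V * diagonal E * star V)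
        = U * (diagonal D * star U * (V * (diagonal E * star V))) from by
      simp only [Matrix.mul_assoc]]
    rw [Matrix.trace_mul_comm, hsW]
    congr 1
    simp only [hW, Matrix.mul_assoc]
  rw [key]
  have entry : ∀ i, (diagonal D * W * diagonal E * star W) i i
      = ∑ j, D i * E j * (W i j * (starRingEnd ℂ) (W i j)) := by
    intro i
    rw [Matrix.mul_apply]
    refine Finset.sum_congr rfl fun j _ => ?_
    rw [Matrix.mul_diagonal, Matrix.diagonal_mul, Matrix.star_apply]
    simp only [RCLike.star_def]
    ring
  rw [Matrix.trace]
  simp only [Matrix.diag]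
  rw [show ∑ i, (diagonal D * W * diagonal E * star W) i i
      = ∑ i, ∑ j, D i * E j * (W i j * (starRingEnd ℂ) (W i j)) from
    Finset.sum_congr rfl fun i _ => entry i]
  rw [Complex.re_sum]
  refine Finset.sum_congr rfl fun i _ => ?_
  rw [Complex.re_sum]
  refine Finset.sum_congr rfl fun j _ => ?_
  rw [Complex.mul_conj]
  simp only [hD, hE]
  rw [← Complex.ofReal_mul, ← Complex.ofReal_mul, Complex.ofReal_re]

private lemma row_col_sums {U V : Matrix (Fin n) (Fin n) ℂ} (hU : U ∈ Matrix.unitaryGroup (Fin n) ℂ)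
    (hV : V ∈ Matrix.unitaryGroup (Fin n) ℂ) :
    (∀ i, ∑ j, Complex.normSq ((star U * V) i j) = 1) ∧
    (∀ j, ∑ i, Complex.normSq ((star U * V) i j) = 1) := by
  set W : Matrix (Fin n) (Fin n) ℂ := star U * V with hW
  have hV1 : V * star V = 1 := (Matrix.mem_unitaryGroup_iff).mp hV
  have hU1 : U * star U = 1 := (Matrix.mem_unitaryGroup_iff).mp hU
  have hV2 : star V * V = 1 := (Matrix.mem_unitaryGroup_iff').mp hV
  have hU2 : star U * U = 1 := (Matrix.mem_unitaryGroup_iff').mp hU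
  have hsW : star W = star V * U := by rw [hW, StarMul.star_mul, star_star]
  have h1 : W * star W = 1 := by
    rw [hW, hsW, Matrix.mul_assoc, ← Matrix.mul_assoc V, hV1, Matrix.one_mul, hU2]
  have h2 : star W * W = 1 := by
    rw [hW, hsW, Matrix.mul_assoc, ← Matrix.mul_assoc U, hU1, Matrix.one_mul, hV2]
  constructor
  · intro i
    have h := congrFun (congrFun h1 i) i
    rw [Matrix.mul_apply] at h
    simp only [Matrix.star_apply, RCLike.star_def, Matrix.one_apply_eq] at h
    have h' : ∑ j, (Complex.normSq (W i j) : ℂ) = 1 := by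
      rw [← h]
      exact Finset.sum_congr rfl fun j _ => (Complex.mul_conj _).symm
    exact_mod_cast h'
  · intro j
    have h := congrFun (congrFun h2 j) j
    rw [Matrix.mul_apply] at h
    simp only [Matrix.star_apply, RCLike.star_def, Matrix.one_apply_eq] at h
    have h' : ∑ i, (Complex.normSq (W i j) : ℂ) = 1 := by
      rw [← h]
      refine Finset.sum_congr rfl fun i _ => ?_
      rw [← Complex.mul_conj]
      ring
    exact_mod_cast h'

private lemma holder {X Z : Matrix (Fin n) (Fin n) ℂ} (hX : X.PosDef) (hZ : Z.PosSemidef) {ν : ℝ}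
    (hν : ν ∈ Set.Ioo (0:ℝ) 1) :
    ((mpow X (1-ν) * mpow Z ν).trace).re ≤ ((X.trace).re) ^ (1-ν) * ((Z.trace).re) ^ ν := by
  have hν1 : (0:ℝ) < ν := hν.1
  have hν2 : ν < 1 := hν.2
  have hX1 := hX.isHermitian
  have hZ1 := hZ.isHermitian
  have hlam : ∀ i, 0 < hX1.eigenvalues i := hX.eigenvalues_pos
  have hmu : ∀ j, 0 ≤ hZ1.eigenvalues j := hZ.eigenvalues_nonneg
  have hTrX : (X.trace).re = ∑ i, hX1.eigenvalues i := by
    rw [trace_eq_sum_eigen hX1, Complex.re_sum]; simp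
  have hTrZ : (Z.trace).re = ∑ j, hZ1.eigenvalues j := by
    rw [trace_eq_sum_eigen hZ1, Complex.re_sum]; simp
  set lam := hX1.eigenvalues with hlamdef
  set mu := hZ1.eigenvalues with hmudef
  set S := ∑ i, lam i with hSdef
  set T := ∑ j, mu j with hTdef
  rw [hTrX, hTrZ]
  rw [mpow, mpow, hX1.cfc_eq, hZ1.cfc_eq, trace_hcfc_mul_hcfc]
  set w : Fin n → Fin n → ℝ := fun i j =>
    Complex.normSq ((star (hX1.eigenvectorUnitary : Matrix (Fin n) (Fin n) ℂ)
      * (hZ1.eigenvectorUnitary : Matrix (Fin n) (Fin n) ℂ)) i j) with hwdef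
  have hw : ∀ i j, 0 ≤ w i j := fun i j => Complex.normSq_nonneg _
  obtain ⟨hrow, hcol⟩ := row_col_sums (SetLike.coe_mem hX1.eigenvectorUnitary)
    (SetLike.coe_mem hZ1.eigenvectorUnitary)
  rcases isEmpty_or_nonempty (Fin n) with hn | hn
  · simp only [Finset.univ_eq_empty, Finset.sum_empty]
    have hS0 : S = 0 := by rw [hSdef]; simp
    have h1 : ((0:ℝ)) ^ (1-ν) = 0 := Real.zero_rpow (by linarith)
    rw [hS0, h1, zero_mul]
  have hS : 0 < S := Finset.sum_pos (fun i _ => hlam i) Finset.univ_nonempty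
  by_cases hT0 : T = 0
  · have hmu0 : ∀ j, mu j = 0 := by
      intro j
      have h1 : mu j ≤ T := Finset.single_le_sum (fun k _ => hmu k) (Finset.mem_univ j)
      exact le_antisymm (hT0 ▸ h1) (hmu j)
    have : ∀ i j, lam i ^ (1-ν) * mu j ^ ν * w i j = 0 := by
      intro i j
      rw [hmu0 j, Real.zero_rpow hν1.ne']
      ring
    rw [Finset.sum_congr rfl fun i _ => Finset.sum_congr rfl fun j _ => this i j]
    simp
    positivity
  have hT : 0 < T := lt_of_le_of_ne (Finset.sum_nonneg fun j _ => hmu j) (Ne.symm hT0)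
  set c := S ^ (1-ν) * T ^ ν with hcdef
  have hc : 0 < c := mul_pos (Real.rpow_pos_of_pos hS _) (Real.rpow_pos_of_pos hT _)
  have term : ∀ i j, lam i ^ (1-ν) * mu j ^ ν ≤ c * ((1-ν) * (lam i / S) + ν * (mu j / T)) := by
    intro i j
    have hgm := Real.geom_mean_le_arith_mean2_weighted (w₁ := 1-ν) (w₂ := ν)
      (p₁ := lam i / S) (p₂ := mu j / T) (by linarith) hν1.le
      (div_nonneg (hlam i).le hS.le) (div_nonneg (hmu j) hT.le) (by ring)
    have hrw : (lam i / S) ^ (1-ν) * (mu j / T) ^ ν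
        = lam i ^ (1-ν) * mu j ^ ν / c := by
      rw [Real.div_rpow (hlam i).le hS.le, Real.div_rpow (hmu j) hT.le, hcdef]
      ring
    rw [hrw, div_le_iff₀ hc] at hgm
    calc lam i ^ (1-ν) * mu j ^ ν ≤ ((1-ν) * (lam i / S) + ν * (mu j / T)) * c := hgm
      _ = c * ((1-ν) * (lam i / S) + ν * (mu j / T)) := by ring
  calc ∑ i, ∑ j, lam i ^ (1-ν) * mu j ^ ν * w i j
      ≤ ∑ i, ∑ j, c * ((1-ν) * (lam i / S) + ν * (mu j / T)) * w i j := by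
        refine Finset.sum_le_sum fun i _ => Finset.sum_le_sum fun j _ => ?_
        exact mul_le_mul_of_nonneg_right (term i j) (hw i j)
    _ = ∑ i, ∑ j, ((c * (1-ν) / S) * (lam i * w i j) + (c * ν / T) * (mu j * w i j)) := by
        refine Finset.sum_congr rfl fun i _ => Finset.sum_congr rfl fun j _ => ?_
        field_simp
    _ = (∑ i, ∑ j, (c * (1-ν) / S) * (lam i * w i j))
        + (∑ i, ∑ j, (c * ν / T) * (mu j * w i j)) := by
        rw [← Finset.sum_add_distrib]
        exact Finset.sum_congr rfl fun i _ => Finset.sum_add_distrib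
    _ = c * (1-ν) + c * ν := by
        congr 1
        · have : ∀ i, ∑ j, (c * (1-ν) / S) * (lam i * w i j) = (c * (1-ν) / S) * lam i := by
            intro i
            rw [← Finset.mul_sum, show ∑ j, lam i * w i j = lam i * ∑ j, w i j from
              (Finset.mul_sum _ _ _).symm, hrow i, mul_one]
          rw [Finset.sum_congr rfl fun i _ => this i, ← Finset.mul_sum, ← hSdef]
          field_simp
        · rw [Finset.sum_comm]
          have : ∀ j, ∑ i, (c * ν / T) * (mu j * w i j) = (c * ν / T) * mu j := by
            intro j
            rw [← Finset.mul_sum, show ∑ i, mu j * w i j = mu j * ∑ i, w i j from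
              (Finset.mul_sum _ _ _).symm, hcol j, mul_one]
          rw [Finset.sum_congr rfl fun j _ => this j, ← Finset.mul_sum, ← hTdef]
          field_simp
    _ = c := by ring

end Helpers

set_option maxHeartbeats 800000 in
/-- Variational expression for the Tsallis relative entropy (part (ii)):
D_ν(X|exp_ν(B)) equals the supremum over positive semidefinite A of
Tr[X^{1-ν}A] - d·ln_ν(Tr[exp_ν(A+B)]/d), where d = Tr X. -/
theorem tsallis_variational_expression_entropy {n : ℕ} (X B : Matrix (Fin n) (Fin n) ℂ)
    (hX : X.PosDef) (hB : B.PosSemidef) (ν d : ℝ) (hν : ν ∈ Set.Ioo (0:ℝ) 1)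
    (hd : (X.trace).re = d) :
    tsallisRel X (texp ν B) ν =
      sSup {r : ℝ | ∃ A : Matrix (Fin n) (Fin n) ℂ, A.PosSemidef ∧
        r = ((mpow X (1 - ν) * A).trace).re -
          d * ((((texp ν (A + B)).trace).re / d) ^ ν - 1) / ν} := by
  obtain ⟨hν1, hν2⟩ := hν
  have hνne : ν ≠ 0 := hν1.ne'
  rcases Nat.eq_zero_or_pos n with hn0 | hnpos
  · subst hn0
    have htr0 : ∀ M : Matrix (Fin 0) (Fin 0) ℂ, M.trace = 0 := fun M => by
      simp [Matrix.trace]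
    have hd0 : d = 0 := by rw [← hd, htr0]; simp
    have hL : tsallisRel X (texp ν B) ν = 0 := by
      unfold tsallisRel; rw [htr0, htr0]; simp
    have hset : {r : ℝ | ∃ A : Matrix (Fin 0) (Fin 0) ℂ, A.PosSemidef ∧
        r = ((mpow X (1 - ν) * A).trace).re -
          d * ((((texp ν (A + B)).trace).re / d) ^ ν - 1) / ν} = {0} := by
      ext r
      simp only [Set.mem_setOf_eq, Set.mem_singleton_iff]
      constructor
      · rintro ⟨A, hA, rfl⟩
        rw [htr0, htr0, hd0]
        simp
      · rintro rfl
        exact ⟨0, Matrix.PosSemidef.zero, by rw [htr0, htr0, hd0]; simp⟩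
    rw [hL, hset, csSup_singleton]
  · haveI : Nonempty (Fin n) := Fin.pos_iff_nonempty.mp hnpos
    have hX1 : X.IsHermitian := hX.1
    have hXsa : IsSelfAdjoint X := hX1
    set lam := hX1.eigenvalues with hlamdef
    have hlam : ∀ i, 0 < lam i := fun i => hX.eigenvalues_pos i
    have hdsum : ∑ i, lam i = d := by
      rw [← hd, trace_eq_sum_eigen hX1, Complex.re_sum]; simp [hlamdef]
    have hdpos : 0 < d := by
      rw [← hdsum]
      exact Finset.sum_pos (fun i _ => hlam i) Finset.univ_nonempty
    have hPdef : mpow X (1 - ν) = Matrix.IsHermitian.cfc hX1 (fun x => x ^ (1-ν)) := by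
      rw [mpow, Matrix.IsHermitian.cfc_eq]
    set p : ℝ := ∑ i, lam i ^ (1-ν) with hpdef
    have htrP : ((mpow X (1-ν)).trace).re = p := by
      rw [hPdef, trace_hcfc, Complex.re_sum]; simp [hpdef, hlamdef]
    have hexpand : ∀ M : Matrix (Fin n) (Fin n) ℂ,
        ((mpow X (1-ν) * (1 + ν • M)).trace).re
          = p + ν * ((mpow X (1-ν) * M).trace).re := by
      intro M
      rw [mul_add, mul_one, Matrix.mul_smul, trace_add, trace_smul, Complex.add_re, htrP]
      congr 1
      rw [Complex.real_smul, Complex.re_ofReal_mul]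
    set b : ℝ := ((mpow X (1-ν) * B).trace).re with hbdef
    have hLHS : tsallisRel X (texp ν B) ν = (d - (p + ν * b)) / ν := by
      unfold tsallisRel
      rw [mpow_texp_psd hB ⟨hν1, hν2⟩, hexpand B, hd]
    rw [hLHS]
    -- upper bound
    have hub : ∀ r ∈ {r : ℝ | ∃ A : Matrix (Fin n) (Fin n) ℂ, A.PosSemidef ∧
        r = ((mpow X (1 - ν) * A).trace).re -
          d * ((((texp ν (A + B)).trace).re / d) ^ ν - 1) / ν},
        r ≤ (d - (p + ν * b)) / ν := by
      rintro r ⟨A, hA, rfl⟩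
      have hABp : (A + B).PosSemidef := hA.add hB
      have hYpsd : (texp ν (A + B)).PosSemidef := texp_psd hABp ⟨hν1, hν2⟩
      set T : ℝ := ((texp ν (A + B)).trace).re with hTdef
      have hT0 : 0 ≤ T := psd_trace_re_nonneg hYpsd
      have hhold : ((mpow X (1-ν) * mpow (texp ν (A + B)) ν).trace).re
          ≤ d ^ (1-ν) * T ^ ν := by
        have := holder hX hYpsd ⟨hν1, hν2⟩
        rwa [hd, ← hTdef] at this
      rw [mpow_texp_psd hABp ⟨hν1, hν2⟩, hexpand] at hhold
      have hsplit : ((mpow X (1-ν) * (A + B)).trace).re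
          = ((mpow X (1-ν) * A).trace).re + b := by
        rw [mul_add, trace_add, Complex.add_re, hbdef]
      rw [hsplit] at hhold
      set a : ℝ := ((mpow X (1-ν) * A).trace).re with hadef
      have hdν : (0:ℝ) < d ^ ν := Real.rpow_pos_of_pos hdpos ν
      have hrw : d * ((T / d) ^ ν - 1) = d ^ (1-ν) * T ^ ν - d := by
        rw [Real.div_rpow hT0 hdpos.le, Real.rpow_sub hdpos, Real.rpow_one]
        field_simp
      rw [hrw]
      rw [show a - (d ^ (1-ν) * T ^ ν - d) / ν = (ν * a - (d ^ (1-ν) * T ^ ν - d)) / ν from by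
        field_simp]
      rw [div_le_div_iff₀ hν1 hν1]
      nlinarith [hhold]
    -- witness
    set τ : ℝ := (B.trace).re with hτdef
    have hτ0 : 0 ≤ τ := psd_trace_re_nonneg hB
    set m : ℝ := Finset.univ.inf' Finset.univ_nonempty lam with hmdef
    have hm0 : 0 < m := (Finset.lt_inf'_iff _).2 fun i _ => hlam i
    have hmle : ∀ i, m ≤ lam i := fun i => Finset.inf'_le _ (Finset.mem_univ i)
    have hmν : (0:ℝ) < m ^ ν := Real.rpow_pos_of_pos hm0 ν
    set γ : ℝ := (1 + ν * τ) / m ^ ν with hγdef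
    have hγ : 0 < γ := div_pos (by nlinarith) hmν
    set g : ℝ → ℝ := fun x => (γ * x ^ ν - 1) / ν with hgdef
    set Astar := Matrix.IsHermitian.cfc hX1 g - B with hAstardef
    have hgτ : ∀ i, τ ≤ g (lam i) := by
      intro i
      have h1 : m ^ ν ≤ lam i ^ ν := Real.rpow_le_rpow hm0.le (hmle i) hν1.le
      have h2 : γ * m ^ ν = 1 + ν * τ := div_mul_cancel₀ _ hmν.ne'
      rw [hgdef]
      simp only
      rw [le_div_iff₀ hν1]
      nlinarith [mul_le_mul_of_nonneg_left h1 hγ.le]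
    have hconst : Matrix.IsHermitian.cfc hX1 (fun _ => τ) = τ • (1 : Matrix (Fin n) (Fin n) ℂ) := by
      rw [← Matrix.IsHermitian.cfc_eq, cfc_const τ X hXsa, Algebra.algebraMap_eq_smul_one]
    have hApsd : Astar.PosSemidef := by
      have e : Astar = (Matrix.IsHermitian.cfc hX1 g - τ • (1 : Matrix (Fin n) (Fin n) ℂ))
          + (τ • (1 : Matrix (Fin n) (Fin n) ℂ) - B) := by rw [hAstardef]; exact (sub_add_sub_cancel _ _ _).symm
      rw [e, ← hconst, hcfc_sub hX1 g (fun _ => τ), hconst]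
      refine Matrix.PosSemidef.add ?_ ?_
      · exact hcfc_posSemidef hX1 fun i => sub_nonneg.2 (hgτ i)
      · rw [hτdef]
        exact smul_one_sub_psd hB
    have hAB : Astar + B = Matrix.IsHermitian.cfc hX1 g := by rw [hAstardef]; exact sub_add_cancel _ _
    set c : ℝ := γ ^ (1/ν) with hcdef
    have hc0 : 0 < c := Real.rpow_pos_of_pos hγ _
    have hcν : c ^ ν = γ := by
      rw [hcdef, ← Real.rpow_mul hγ.le, one_div_mul_cancel hνne, Real.rpow_one]
    have htexp : texp ν (Astar + B) = c • X := by
      rw [hAB, ← Matrix.IsHermitian.cfc_eq hX1 g, texp,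
        ← cfc_comp (fun x : ℝ => (1 + ν * x) ^ (1/ν)) g X hXsa (contOnImg X _ _) (contOnSpec X _)]
      have hcong : (spectrum ℝ X).EqOn ((fun x : ℝ => (1 + ν * x) ^ (1/ν)) ∘ g)
          (fun x => c * x) := by
        intro x hx
        have hx0 : 0 < x := spec_pos_of_pd hX x hx
        simp only [Function.comp_apply, hgdef]
        rw [show 1 + ν * ((γ * x ^ ν - 1) / ν) = γ * x ^ ν from by field_simp; ring,
          Real.mul_rpow hγ.le (Real.rpow_nonneg hx0.le ν), ← Real.rpow_mul hx0.le,
          mul_one_div_cancel hνne, Real.rpow_one, ← hcdef]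
      rw [cfc_congr hcong, cfc_const_mul_id c X hXsa]
    have htrY : ((texp ν (Astar + B)).trace).re = c * d := by
      rw [htexp, trace_smul]
      rw [show (c • X.trace) = (c : ℂ) * X.trace from by
        rw [Complex.real_smul]]
      rw [Complex.re_ofReal_mul, hd]
    have htrPA : ((mpow X (1-ν) * Astar).trace).re = (γ * d - p) / ν - b := by
      rw [hAstardef, mul_sub, trace_sub, Complex.sub_re, ← hbdef]
      congr 1
      rw [hPdef, hcfc_mul hX1, trace_hcfc, Complex.re_sum]
      simp only [Complex.ofReal_re]
      have hterm : ∀ i, lam i ^ (1-ν) * g (lam i) = (γ * lam i - lam i ^ (1-ν)) / ν := by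
        intro i
        have hmulpow : lam i ^ (1-ν) * lam i ^ ν = lam i := by
          rw [← Real.rpow_add (hlam i)]; norm_num
        rw [hgdef]
        simp only
        rw [show lam i ^ (1-ν) * ((γ * lam i ^ ν - 1) / ν)
            = (γ * (lam i ^ (1-ν) * lam i ^ ν) - lam i ^ (1-ν)) / ν from by ring, hmulpow]
      rw [Finset.sum_congr rfl fun i _ => hterm i, ← Finset.sum_div]
      congr 1
      rw [Finset.sum_sub_distrib, ← Finset.mul_sum, hdsum, ← hpdef]
    have hval : ((mpow X (1 - ν) * Astar).trace).re -
        d * ((((texp ν (Astar + B)).trace).re / d) ^ ν - 1) / ν = (d - (p + ν * b)) / ν := by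
      rw [htrPA, htrY, show c * d / d = c from mul_div_cancel_right₀ c hdpos.ne', hcν]
      field_simp
      ring
    have hmem : (d - (p + ν * b)) / ν ∈ {r : ℝ | ∃ A : Matrix (Fin n) (Fin n) ℂ, A.PosSemidef ∧
        r = ((mpow X (1 - ν) * A).trace).re -
          d * ((((texp ν (A + B)).trace).re / d) ^ ν - 1) / ν} :=
      ⟨Astar, hApsd, hval.symm⟩
    exact le_antisymm (le_csSup ⟨_, fun r hr => hub r hr⟩ hmem) (csSup_le ⟨_, hmem⟩ hub)
end
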